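/- arXiv:2309.08528 — 6 statements merged into one kernel-verified Lean document; each statement's English description precedes it below -/
import Mathlib

section
/- Let g be a positive integer and let M be a symmetric g×g integer matrix with nonzero determinant Δ = det M, and write ⟨x,y⟩ = xᵀMy for x, y ∈ ℚ^g. Then for all α, β, γ ∈ M⁻¹ℤ^g we have Δ·(⟨γ,α⟩·β − ⟨γ,β⟩·α) ∈ ℤ^g. -/
open scoped BigOperators Classical

noncomputable section

/-- The bilinear form `⟨x,y⟩ = xᵀ M y` on `ℚ^g`. -/
def bform {g : ℕ} (M : Matrix (Fin g) (Fin g) ℤ) (x y : Fin g → ℚ) : ℚ :=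
  dotProduct x (Matrix.mulVec (M.map (Int.cast : ℤ → ℚ)) y)

/-- The quadratic form `q(x) = ⟨x,x⟩/2`. -/
def qf {g : ℕ} (M : Matrix (Fin g) (Fin g) ℤ) (x : Fin g → ℚ) : ℚ :=
  bform M x x / 2

/-- Membership in the dual lattice `L' = {x : ⟨x,y⟩ ∈ ℤ for all y ∈ ℤ^g}`. -/
def IsDual {g : ℕ} (M : Matrix (Fin g) (Fin g) ℤ) (x : Fin g → ℚ) : Prop :=
  ∀ y : Fin g → ℤ, ∃ z : ℤ, bform M x (fun i => (y i : ℚ)) = (z : ℚ)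

/-- `e_c(x) = exp(2πix/c)`. -/
def ec (c : ℤ) (x : ℚ) : ℂ :=
  Complex.exp (2 * Real.pi * Complex.I * (x : ℂ) / (c : ℂ))

/-- Fundamental discriminant. -/
def IsFundDisc (D : ℤ) : Prop :=
  D ≠ 0 ∧ ((D % 4 = 1 ∧ Squarefree D) ∨
    ∃ D₀ : ℤ, D = 4 * D₀ ∧ Squarefree D₀ ∧ (D₀ % 4 = 2 ∨ D₀ % 4 = 3))

/-- The Kronecker symbol at 2. -/
def kron2 (a : ℤ) : ℤ :=
  if a % 2 = 0 then 0 else if a % 8 = 1 ∨ a % 8 = 7 then 1 else -1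

/-- The Kronecker symbol `(a|b)`. -/
def kron (a b : ℤ) : ℤ :=
  if b = 0 then (if a = 1 ∨ a = -1 then 1 else 0)
  else (if b < 0 ∧ a < 0 then -1 else 1) *
    kron2 a ^ (b.natAbs.factorization 2) *
    jacobiSym a (b.natAbs / 2 ^ (b.natAbs.factorization 2))

/-- The generalized Kloosterman sum `S_{α,β}(m,n,c)` (normalized by `i^σ`). -/
def Kloos {g : ℕ} (M : Matrix (Fin g) (Fin g) ℤ) (α β : Fin g → ℚ)
    (m n : ℤ) (c : ℕ) : ℂ :=
  ((((Real.sqrt c) ^ g)⁻¹ * (Real.sqrt (M.det.natAbs))⁻¹ : ℝ) : ℂ) *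
    ∑ d ∈ Finset.range c,
      if Nat.gcd d c = 1 then
        ∑ r : Fin g → Fin c,
          ec c (-((((d : ZMod c)⁻¹).val : ℚ) * qf M (fun i => α i + ((r i : ℕ) : ℚ)))
              + bform M β (fun i => α i + ((r i : ℕ) : ℚ))
              - (d : ℚ) * qf M β) *
          ec (2 * M.det * c) ((m : ℚ) * (((d : ZMod c)⁻¹).val : ℚ) + (n : ℚ) * (d : ℚ))
      else 0

/-- `p*` as in Gross–Kohnen–Zagier. -/
def pstar (p : ℕ) (m : ℤ) : ℤ :=
  if p = 2 then
    (if (m / 2 ^ (m.natAbs.factorization 2)) % 4 = 1 then 1 else -1)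
      * 2 ^ (m.natAbs.factorization 2)
  else if (p : ℤ) % 4 = 1 then (p : ℤ) else -(p : ℤ)

/-- The genus character `χ_m(Nc, ℓ, (ℓ²−mn)/(4Nc))`, via the GKZ product formula. -/
def chiGKZ (Δ m ℓ n : ℤ) (c : ℕ) : ℤ :=
  ∏ p ∈ c.primeFactors,
    if (p : ℤ) ∣ m then
      kron (m / pstar p m) ((p : ℤ) ^ (c.factorization p + (2 * Δ).natAbs.factorization p)) *
        kron (pstar p m)
          ((ℓ ^ 2 - m * n) / (p : ℤ) ^ (c.factorization p + (2 * Δ).natAbs.factorization p))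
    else kron m ((p : ℤ) ^ (c.factorization p))

/-- `f(v,r) = m̃v² − ⟨α,r⟩v − q(r) + ⟨β,r⟩ − ℓ̃v`. -/
def fval {g : ℕ} (M : Matrix (Fin g) (Fin g) ℤ) (α β : Fin g → ℚ)
    (ℓ m : ℤ) (v : ℤ) (r : Fin g → ℤ) : ℚ :=
  ((m : ℚ) / (2 * M.det) - qf M α) * (v : ℚ) ^ 2
    - bform M α (fun i => (r i : ℚ)) * (v : ℚ)
    - qf M (fun i => (r i : ℚ))
    + bform M β (fun i => (r i : ℚ))
    - ((ℓ : ℚ) / (M.det : ℚ) - bform M α β) * (v : ℚ)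

/-- `N(t)`: the number of solutions of `f(v,r) + ñ ≡ 0 (mod t)`. -/
def Ncount {g : ℕ} (M : Matrix (Fin g) (Fin g) ℤ) (α β : Fin g → ℚ)
    (ℓ m n : ℤ) (t : ℕ) : ℕ :=
  Nat.card {vr : Fin t × (Fin g → Fin t) //
    ∃ z : ℤ, fval M α β ℓ m ((vr.1 : ℕ) : ℤ) (fun i => ((vr.2 i : ℕ) : ℤ))
        + ((n : ℚ) / (2 * M.det) - qf M β) = (z : ℚ) * (t : ℚ)}

/-- `M_j(p^k)` (with ambient modulus `p^λ`). -/
def Mcount {g : ℕ} (M : Matrix (Fin g) (Fin g) ℤ) (α β : Fin g → ℚ)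
    (ℓ m n : ℤ) (p lam j k : ℕ) : ℕ :=
  Nat.card {vr : Fin (p ^ lam) × (Fin g → Fin (p ^ lam)) //
    (∃ z : ℤ, fval M α β ℓ m ((vr.1 : ℕ) : ℤ) (fun i => ((vr.2 i : ℕ) : ℤ))
        + ((n : ℚ) / (2 * M.det) - qf M β) = (z : ℚ) * (p : ℚ) ^ k) ∧
    (∃ z : ℤ, 2 * ((m : ℚ) / (2 * M.det) - qf M α) * ((vr.1 : ℕ) : ℚ)
        - bform M α (fun i => ((vr.2 i : ℕ) : ℚ))
        - ((ℓ : ℚ) / (M.det : ℚ) - bform M α β) = (z : ℚ) * (p : ℚ) ^ j) ∧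
    (∀ y : Fin g → ℤ, ∃ z : ℤ,
        bform M (fun i => α i * ((vr.1 : ℕ) : ℚ) + ((vr.2 i : ℕ) : ℚ) - β i)
          (fun i => (y i : ℚ)) = (z : ℚ) * (p : ℚ) ^ j)}

/-- The exponential sum `𝒮(d,u)`. -/
def Ssum {g : ℕ} (M : Matrix (Fin g) (Fin g) ℤ) (α β : Fin g → ℚ)
    (ℓ m : ℤ) (d : ℤ) (u : ℕ) : ℂ :=
  ∑ v : Fin u, ∑ r : Fin g → Fin u,
    ec u ((d : ℚ) * fval M α β ℓ m ((v : ℕ) : ℤ) (fun i => ((r i : ℕ) : ℤ)))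

/-- `ξ_{α,β}(ℓ,m,n,·)` at a prime power `p^λ`. -/
def xiP {g : ℕ} (M : Matrix (Fin g) (Fin g) ℤ) (α β : Fin g → ℚ)
    (ℓ m n : ℤ) (p lam : ℕ) : ℚ :=
  if p = 2 ∨ ((p : ℤ) ∣ m ∧ (p : ℤ) ∣ M.det) then
    (if ((M.det.natAbs : ℤ) * (p : ℤ) ^ (2 * (lam / 2))) ∣ (ℓ ^ 2 - m * n) then
      ((Ncount M α β ℓ m n (p ^ lam) : ℚ)
          - (p : ℚ) ^ g * (Ncount M α β ℓ m n (p ^ (lam - 1)) : ℚ))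
        / (p : ℚ) ^ (lam * ((g + 1) / 2))
    else 0)
  else if (p : ℤ) ∣ m then
    (if (p : ℤ) ^ lam ∣ (ℓ ^ 2 - m * n) then
      ((kron (((-4) ^ ((g - 1) / 2) * m) / pstar p m) ((p : ℤ) ^ lam)
        * kron (pstar p m) ((ℓ ^ 2 - m * n) / (p : ℤ) ^ lam) : ℤ) : ℚ)
    else 0)
  else
    (if (p : ℤ) ^ (lam + (2 * M.det).natAbs.factorization p) ∣ (ℓ ^ 2 - m * n) then
      ((kron ((-4) ^ ((g - 1) / 2) * m) ((p : ℤ) ^ lam) : ℤ) : ℚ)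
    else 0)

/-- The multiplicative function `ξ_{α,β}(ℓ,m,n,c)`. -/
def xi {g : ℕ} (M : Matrix (Fin g) (Fin g) ℤ) (α β : Fin g → ℚ)
    (ℓ m n : ℤ) (c : ℕ) : ℚ :=
  ∏ p ∈ c.primeFactors, xiP M α β ℓ m n p (c.factorization p)

end

open Matrix in
/-- For α, β, γ ∈ M⁻¹ℤ^g, `Δ(⟨γ,α⟩β − ⟨γ,β⟩α) ∈ ℤ^g` (Lemma 5 of the paper). -/
theorem det_smul_combination_integral
    {g : ℕ} (hg : 0 < g) (M : Matrix (Fin g) (Fin g) ℤ)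
    (hsymm : M.IsSymm) (hdet : M.det ≠ 0)
    (α β γ : Fin g → ℚ)
    (hα : ∃ a : Fin g → ℤ, Matrix.mulVec (M.map (Int.cast : ℤ → ℚ)) α = fun i => (a i : ℚ))
    (hβ : ∃ b : Fin g → ℤ, Matrix.mulVec (M.map (Int.cast : ℤ → ℚ)) β = fun i => (b i : ℚ))
    (hγ : ∃ cc : Fin g → ℤ, Matrix.mulVec (M.map (Int.cast : ℤ → ℚ)) γ = fun i => (cc i : ℚ)) :
    ∃ x : Fin g → ℤ, ∀ i,
      (M.det : ℚ) * (bform M γ α * β i - bform M γ β * α i) = (x i : ℚ) := by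
    classical
  obtain ⟨a, ha⟩ := hα
  obtain ⟨b, hb⟩ := hβ
  obtain ⟨c, hc⟩ := hγ
  set Mq : Matrix (Fin g) (Fin g) ℚ := M.map (Int.cast : ℤ → ℚ) with hMq
  have hMqsymm : Mqᵀ = Mq := by
    rw [hMq, ← Matrix.transpose_map, hsymm]
  have hdetq : Mq.det = (M.det : ℚ) := ((Int.castRingHom ℚ).map_det M).symm
  have hdetu : IsUnit Mq.det := by
    rw [hdetq]; exact isUnit_iff_ne_zero.mpr (by exact_mod_cast hdet)
  haveI : Invertible Mq := Mq.invertibleOfIsUnitDet hdetu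
  set K : Matrix (Fin g) (Fin g) ℚ := Mq⁻¹ with hK
  have hKsymm : Kᵀ = K := by rw [hK, Matrix.transpose_nonsing_inv, hMqsymm]
  have hKM : K * Mq = 1 := Matrix.nonsing_inv_mul Mq hdetu
  set aq : Fin g → ℚ := fun i => (a i : ℚ) with haq
  set bq : Fin g → ℚ := fun i => (b i : ℚ) with hbq
  set cq : Fin g → ℚ := fun i => (c i : ℚ) with hcq
  have hrec : ∀ (v : Fin g → ℚ) (w : Fin g → ℚ), Mq *ᵥ v = w → v = K *ᵥ w := by
    intro v w h
    rw [← h, Matrix.mulVec_mulVec, hKM, Matrix.one_mulVec]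
  have hαK : α = K *ᵥ aq := hrec α aq ha
  have hβK : β = K *ᵥ bq := hrec β bq hb
  have hγK : γ = K *ᵥ cq := hrec γ cq hc
  have hsymK : ∀ u v : Fin g → ℚ, (K *ᵥ u) ⬝ᵥ v = u ⬝ᵥ (K *ᵥ v) := by
    intro u v
    rw [Matrix.dotProduct_mulVec, ← Matrix.mulVec_transpose, hKsymm]
  refine ⟨fun i => (Matrix.fromBlocks M
      (Matrix.of fun j (k : Fin 2) => if k = 0 then a j else b j)
      (Matrix.of fun (k : Fin 2) j => if k = 0 then c j else if j = i then 1 else 0)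
      (0 : Matrix (Fin 2) (Fin 2) ℤ)).det, fun i => ?_⟩
  set X : Matrix (Fin g) (Fin 2) ℤ := Matrix.of fun j (k : Fin 2) => if k = 0 then a j else b j with hX
  set U : Matrix (Fin 2) (Fin g) ℤ := Matrix.of fun (k : Fin 2) j => if k = 0 then c j else if j = i then 1 else 0 with hU
  set Xq : Matrix (Fin g) (Fin 2) ℚ := X.map (Int.cast : ℤ → ℚ)
  set Uq : Matrix (Fin 2) (Fin g) ℚ := U.map (Int.cast : ℤ → ℚ)
  have hcast : (((Matrix.fromBlocks M X U 0).det : ℤ) : ℚ)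
      = (Matrix.fromBlocks Mq Xq Uq (0 : Matrix (Fin 2) (Fin 2) ℚ)).det := by
    have h1 := (Int.castRingHom ℚ).map_det (Matrix.fromBlocks M X U 0)
    rw [RingHom.mapMatrix_apply, Matrix.fromBlocks_map] at h1
    simpa using h1
  rw [hcast, Matrix.det_fromBlocks₁₁, Matrix.invOf_eq_nonsing_inv, ← hK, hdetq]
  -- compute the 2x2 determinant
  have hSentry : ∀ (k l : Fin 2), (Uq * K * Xq) k l
      = (fun j => Uq k j) ⬝ᵥ K *ᵥ (fun j => Xq j l) := by
    intro k l
    simp only [Matrix.mul_apply, dotProduct, Matrix.mulVec, Finset.sum_mul,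
      Finset.mul_sum]
    rw [Finset.sum_comm]
    exact Finset.sum_congr rfl fun _ _ => Finset.sum_congr rfl fun _ _ => by ring
  have hU0 : (fun j => Uq 0 j) = cq := by
    funext j; simp [hU, hcq, Uq]
  have hU1 : (fun j => Uq 1 j) = Pi.single i (1:ℚ) := by
    funext j
    by_cases h : j = i <;> simp [hU, Uq, h, Pi.single_apply]
  have hX0 : (fun j => Xq j 0) = aq := by funext j; simp [hX, haq, Xq]
  have hX1 : (fun j => Xq j 1) = bq := by
    funext j; simp [hX, hbq, Xq]
  rw [Matrix.det_fin_two]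
  simp only [Matrix.sub_apply, Matrix.zero_apply, hSentry, hU0, hU1, hX0, hX1,
    single_dotProduct, zero_sub]
  have e1 : bform M γ α = cq ⬝ᵥ (K *ᵥ aq) := by
    rw [bform, ← hMq, ha, hγK]; exact hsymK cq aq
  have e2 : bform M γ β = cq ⬝ᵥ (K *ᵥ bq) := by
    rw [bform, ← hMq, hb, hγK]; exact hsymK cq bq
  rw [e1, e2, hβK, hαK]
  ring
end

section
/- Suppose g is odd. Let α, β ∈ L' and let ℓ, m, n be integers such that ℓ/Δ − ⟨α,β⟩ ∈ ℤ, m/(2Δ) − q(α) ∈ ℤ, and n/(2Δ) − q(β) ∈ ℤ. Then ℓ² ≡ mn (mod 2N). If moreover g = 1, then ℓ² ≡ mn (mod 4N). -/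
open scoped BigOperators Classical

open Matrix in
lemma aux_div {g : ℕ} (M : Matrix (Fin g) (Fin g) ℤ) (hdet : M.det ≠ 0)
    (a b : Fin g → ℤ) :
    M.det ∣ (a ⬝ᵥ M.adjugate.mulVec b) * (b ⬝ᵥ M.adjugate.mulVec a)
      - (a ⬝ᵥ M.adjugate.mulVec a) * (b ⬝ᵥ M.adjugate.mulVec b) := by
  classical
  set f : ℤ →+* ℚ := Int.castRingHom ℚ
  set Mq : Matrix (Fin g) (Fin g) ℚ := M.map f with hMqdef
  have hdetq : Mq.det = (M.det : ℚ) := (RingHom.map_det f M).symm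
  have hdq : Mq.det ≠ 0 := by rw [hdetq]; exact_mod_cast hdet
  haveI : Invertible Mq := Mq.invertibleOfIsUnitDet (isUnit_iff_ne_zero.2 hdq)
  set P : Matrix (Fin g) (Fin 2) ℤ := Matrix.of fun i j => ![a i, b i] j with hP
  set G : Matrix (Fin 2) (Fin 2) ℤ := Pᵀ * M.adjugate * P with hG
  have hGentry : ∀ i j, G i j = (fun k => P k i) ⬝ᵥ M.adjugate.mulVec (fun k => P k j) := by
    intro i j
    simp only [hG, Matrix.mul_apply, Matrix.transpose_apply, Matrix.mulVec, dotProduct,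
      Finset.sum_mul, Finset.mul_sum]
    rw [Finset.sum_comm]
    exact Finset.sum_congr rfl fun k _ => Finset.sum_congr rfl fun l _ => by ring
  set B : Matrix (Fin g ⊕ Fin 2) (Fin g ⊕ Fin 2) ℤ := Matrix.fromBlocks M P Pᵀ 0 with hB
  have hBq : (B.map f) = Matrix.fromBlocks Mq (P.map f) ((P.map f)ᵀ) 0 := by
    simp [hB, Matrix.fromBlocks_map, Matrix.transpose_map, hMqdef]
  have hstep : ((B.det : ℚ)) = Mq.det * Matrix.det ((0 : Matrix (Fin 2) (Fin 2) ℚ)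
      - (P.map f)ᵀ * ⅟Mq * (P.map f)) := by
    have h2 := Matrix.det_fromBlocks₁₁ Mq (P.map f) ((P.map f)ᵀ) (0 : Matrix (Fin 2) (Fin 2) ℚ)
    rw [← hBq] at h2
    rw [← h2]
    exact RingHom.map_det f B
  have hinv : (⅟Mq : Matrix (Fin g) (Fin g) ℚ) = ((M.det : ℚ))⁻¹ • (M.adjugate.map f) := by
    rw [Matrix.invOf_eq_nonsing_inv, Matrix.inv_def, Ring.inverse_eq_inv', hdetq]
    congr 1
    exact (f.map_adjugate M).symm
  have hGq : (P.map f)ᵀ * (M.adjugate.map f) * (P.map f) = G.map f := by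
    rw [hG, Matrix.map_mul, Matrix.map_mul, Matrix.transpose_map]
  have hdetG : ((0 : Matrix (Fin 2) (Fin 2) ℚ) - (P.map f)ᵀ * ⅟Mq * (P.map f)).det
      = ((M.det : ℚ))⁻¹ ^ 2 * ((G.det : ℚ)) := by
    rw [hinv, zero_sub, Matrix.mul_smul, Matrix.smul_mul, hGq, ← smul_neg, Matrix.det_smul,
      Matrix.det_neg]
    simp only [Fintype.card_fin]
    have hh := RingHom.map_det f G
    rw [RingHom.mapMatrix_apply] at hh
    rw [show ((-1 : ℚ)) ^ 2 = 1 by norm_num, one_mul, ← hh]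
    rfl
  have hfinal : (G.det : ℚ) = (M.det : ℚ) * (B.det : ℚ) := by
    rw [hstep, hdetG, hdetq]
    have : (M.det : ℚ) ≠ 0 := by exact_mod_cast hdet
    field_simp
  have hfinalZ : G.det = M.det * B.det := by exact_mod_cast hfinal
  refine ⟨-B.det, ?_⟩
  have hdet2 : G.det = G 0 0 * G 1 1 - G 0 1 * G 1 0 := Matrix.det_fin_two G
  rw [hGentry, hGentry, hGentry, hGentry] at hdet2
  simp only [hP, Matrix.of_apply, Matrix.cons_val_zero, Matrix.cons_val_one,
    Matrix.head_cons] at hdet2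
  linear_combination hdet2 - hfinalZ

open Matrix in
/-- `ℓ² ≡ mn (mod 2N)`, and `(mod 4N)` when `g = 1` (Lemma 6 of the paper).
Here `2N = |Δ|`. -/
theorem ellsq_congruent_mn
    {g : ℕ} (hg : Odd g) (M : Matrix (Fin g) (Fin g) ℤ)
    (hsymm : M.IsSymm) (hdiag : ∀ i, Even (M i i)) (hdet : M.det ≠ 0)
    (α β : Fin g → ℚ) (hα : IsDual M α) (hβ : IsDual M β)
    (ℓ m n : ℤ)
    (hℓ : ∃ z : ℤ, (ℓ : ℚ) / (M.det : ℚ) - bform M α β = (z : ℚ))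
    (hm : ∃ z : ℤ, (m : ℚ) / (2 * M.det) - qf M α = (z : ℚ))
    (hn : ∃ z : ℤ, (n : ℚ) / (2 * M.det) - qf M β = (z : ℚ)) :
    ((M.det.natAbs : ℤ) ∣ (ℓ ^ 2 - m * n)) ∧
      (g = 1 → (2 * (M.det.natAbs : ℤ)) ∣ (ℓ ^ 2 - m * n)) := by
  classical
  set Δ : ℤ := M.det with hΔ
  set Mq : Matrix (Fin g) (Fin g) ℚ := M.map (Int.cast : ℤ → ℚ) with hMq
  have hdetq : Mq.det = (Δ : ℚ) := ((Int.castRingHom ℚ).map_det M).symm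
  have hdq : Mq.det ≠ 0 := by rw [hdetq]; exact_mod_cast hdet
  have hΔq : (Δ : ℚ) ≠ 0 := by exact_mod_cast hdet
  have hMqsymm : Mqᵀ = Mq := by
    rw [hMq, ← Matrix.transpose_map]
    exact congrArg (fun X => Matrix.map X (Int.cast : ℤ → ℚ)) hsymm
  have hvec : ∀ (x : Fin g → ℚ), IsDual M x →
      ∃ u : Fin g → ℤ, ∀ i, ((u i : ℚ)) = Mq.mulVec x i := by
    intro x hx
    choose u hu using fun i => hx (Pi.single i 1)
    refine ⟨u, fun i => ?_⟩
    have hcast : (fun j => (((Pi.single i 1 : Fin g → ℤ) j : ℚ))) = Pi.single i 1 := by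
      funext j
      by_cases hji : j = i <;> simp [Pi.single_apply, hji]
    have := (hu i).symm
    rw [hcast] at this
    rw [this]
    rw [show bform M x (Pi.single i 1) = x ⬝ᵥ Mq.mulVec (Pi.single i 1) from rfl]
    rw [Matrix.dotProduct_mulVec, ← Matrix.mulVec_transpose, hMqsymm, dotProduct_comm]
    simp [dotProduct, Pi.single_apply]
  obtain ⟨a, ha⟩ := hvec α hα
  obtain ⟨b, hb⟩ := hvec β hβ
  have key : ∀ (x y : Fin g → ℚ) (u v : Fin g → ℤ),
      (∀ i, ((u i : ℚ)) = Mq.mulVec x i) → (∀ i, ((v i : ℚ)) = Mq.mulVec y i) →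
      bform M x y = ((v ⬝ᵥ M.adjugate.mulVec u : ℤ) : ℚ) / (Δ : ℚ) := by
    intro x y u v hu hv
    have hx : x = Mq⁻¹.mulVec (fun i => (u i : ℚ)) := by
      have : (fun i => ((u i : ℚ))) = Mq.mulVec x := funext hu
      rw [this, Matrix.mulVec_mulVec, Matrix.nonsing_inv_mul _ (isUnit_iff_ne_zero.2 hdq),
        Matrix.one_mulVec]
    have hy : Mq.mulVec y = (fun i => (v i : ℚ)) := (funext hv).symm
    have hadjq : Mq.adjugate = M.adjugate.map (Int.cast : ℤ → ℚ) := by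
      have h5 := (Int.castRingHom ℚ).map_adjugate M
      simp only [RingHom.mapMatrix_apply, Int.coe_castRingHom] at h5
      rw [hMq, ← h5]
    rw [show bform M x y = x ⬝ᵥ Mq.mulVec y from rfl, hy, dotProduct_comm, hx,
      Matrix.inv_def, Ring.inverse_eq_inv', hdetq, hadjq]
    rw [Matrix.smul_mulVec, dotProduct_smul]
    rw [div_eq_inv_mul]
    congr 1
    simp only [dotProduct, Matrix.mulVec, Matrix.map_apply]
    push_cast
    rfl
  have hbab := key α β a b ha hb
  have hbba := key β α b a hb ha
  have hbaa := key α α a a ha ha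
  have hbbb := key β β b b hb hb
  have hbsymm : bform M α β = bform M β α := by
    rw [show bform M α β = α ⬝ᵥ Mq.mulVec β from rfl,
      show bform M β α = β ⬝ᵥ Mq.mulVec α from rfl,
      Matrix.dotProduct_mulVec, ← Matrix.mulVec_transpose, hMqsymm, dotProduct_comm]
  set L : ℤ := b ⬝ᵥ M.adjugate.mulVec a with hLdef
  set L' : ℤ := a ⬝ᵥ M.adjugate.mulVec b with hL'def
  set Ma : ℤ := a ⬝ᵥ M.adjugate.mulVec a with hMadef
  set Nb : ℤ := b ⬝ᵥ M.adjugate.mulVec b with hNbdef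
  have hLL' : L' = L := by
    have : ((L : ℚ)) / (Δ : ℚ) = ((L' : ℚ)) / (Δ : ℚ) := by
      rw [← hbab, ← hbba, hbsymm]
    have h2 : L = L' := by
      field_simp at this
      exact_mod_cast this
    exact h2.symm
  obtain ⟨z, hz⟩ := hℓ
  obtain ⟨z1, hz1⟩ := hm
  obtain ⟨z2, hz2⟩ := hn
  have hℓ' : ℓ = L + Δ * z := by
    rw [hbab] at hz
    have h2 : ((ℓ : ℚ) - L) / (Δ : ℚ) = z := by rw [← hz]; ring
    rw [div_eq_iff hΔq] at h2
    have h3 : (ℓ : ℚ) = L + Δ * z := by linarith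
    exact_mod_cast h3
  have hm' : m = Ma + 2 * Δ * z1 := by
    rw [show qf M α = bform M α α / 2 from rfl, hbaa] at hz1
    have h2 : ((m : ℚ) - Ma) / (2 * (Δ : ℚ)) = z1 := by rw [← hz1]; ring
    rw [div_eq_iff (mul_ne_zero two_ne_zero hΔq)] at h2
    have h3 : (m : ℚ) = Ma + 2 * Δ * z1 := by linarith
    exact_mod_cast h3
  have hn' : n = Nb + 2 * Δ * z2 := by
    rw [show qf M β = bform M β β / 2 from rfl, hbbb] at hz2
    have h2 : ((n : ℚ) - Nb) / (2 * (Δ : ℚ)) = z2 := by rw [← hz2]; ring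
    rw [div_eq_iff (mul_ne_zero two_ne_zero hΔq)] at h2
    have h3 : (n : ℚ) = Nb + 2 * Δ * z2 := by linarith
    exact_mod_cast h3
  obtain ⟨K, hK⟩ := aux_div M hdet a b
  rw [← hLdef, ← hL'def, ← hMadef, ← hNbdef, ← hΔ] at hK
  constructor
  · rw [Int.natAbs_dvd]
    refine ⟨K + 2 * L * z + Δ * z ^ 2 - 2 * z1 * Nb - 2 * z2 * Ma - 4 * Δ * z1 * z2, ?_⟩
    rw [hℓ', hm', hn']
    linear_combination hK - L * hLL'
  · intro h1
    subst h1
    have hΔeven : Even Δ := by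
      rw [hΔ, Matrix.det_fin_one]
      exact hdiag 0
    obtain ⟨d, hd⟩ := hΔeven
    have hadj : M.adjugate = 1 := Matrix.adjugate_fin_one M
    have hL0 : L = a 0 * b 0 := by
      rw [hLdef, hadj, Matrix.one_mulVec]
      simp [dotProduct, Fin.sum_univ_one, mul_comm]
    have hMa0 : Ma = a 0 * a 0 := by
      rw [hMadef, hadj, Matrix.one_mulVec]
      simp [dotProduct, Fin.sum_univ_one]
    have hNb0 : Nb = b 0 * b 0 := by
      rw [hNbdef, hadj, Matrix.one_mulVec]
      simp [dotProduct, Fin.sum_univ_one]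
    rw [show (2 * ((M.det).natAbs : ℤ)) = (((2 * M.det).natAbs : ℤ)) by
      rw [Int.natAbs_mul]; push_cast; rfl, Int.natAbs_dvd]
    refine ⟨L * z + d * z ^ 2 - z1 * Nb - z2 * Ma - 2 * Δ * z1 * z2, ?_⟩
    rw [hℓ', hm', hn']
    have hzero : L' * L - Ma * Nb = 0 := by
      rw [hLL', hL0, hMa0, hNb0]
      ring
    rw [← hΔ]
    linear_combination hzero - L * hLL' + Δ * z ^ 2 * hd
end

section
/- Suppose g is odd. Let α ∈ L' and let m be an integer with m/(2Δ) − q(α) ∈ ℤ. Then (−1)^((g−1)/2)·m ≡ 0 or 1 (mod 4). -/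
open scoped BigOperators Classical

open Matrix

lemma even_zmod4_iff (x : ZMod 4) : Even x ↔ x = 0 ∨ x = 2 := by
  constructor
  · rintro ⟨r, rfl⟩; revert r; decide
  · rintro (rfl | rfl)
    exacts [⟨0, rfl⟩, ⟨1, rfl⟩]

lemma even_mul_even_zmod4 {x y : ZMod 4} (hx : Even x) (hy : Even y) : x * y = 0 := by
  rw [even_zmod4_iff] at hx hy
  rcases hx with rfl | rfl <;> rcases hy with rfl | rfl <;> decide

lemma odd_sq_zmod4 {x : ZMod 4} (hx : ¬ Even x) : x * x = 1 := by
  rw [even_zmod4_iff] at hx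
  push_neg at hx
  revert x; decide

lemma det_even_of_odd_rank {g : ℕ} (hg : Odd g) (M : Matrix (Fin g) (Fin g) ℤ)
    (hsymm : M.IsSymm) (hdiag : ∀ i, Even (M i i)) : (2:ℤ) ∣ M.det := by
  set K : Matrix (Fin g) (Fin g) ℤ :=
    Matrix.of fun i j => if i < j then M i j else if j < i then -M i j else 0 with hK
  have hKT : Kᵀ = -K := by
    ext i j
    simp only [Matrix.transpose_apply, Matrix.neg_apply, hK, Matrix.of_apply]
    rcases lt_trichotomy i j with h | h | h
    · simp [h, not_lt.2 h.le, asymm h, hsymm.apply i j]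
    · simp [h]
    · simp [h, not_lt.2 h.le, asymm h, hsymm.apply i j]
  have hdK : K.det = 0 := by
    have h1 : K.det = (-K).det := by rw [← hKT, Matrix.det_transpose]
    rw [Matrix.det_neg, Fintype.card_fin, hg.neg_one_pow] at h1
    linarith
  have hcast : (M.map (Int.cast : ℤ → ZMod 2)) = (K.map (Int.cast : ℤ → ZMod 2)) := by
    ext i j
    simp only [Matrix.map_apply, hK, Matrix.of_apply]
    rcases lt_trichotomy i j with h | h | h
    · simp [h]
    · subst h
      simp only [lt_irrefl, if_false]
      obtain ⟨r, hr⟩ := hdiag i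
      push_cast [hr]
      have h2 : (2 : ZMod 2) = 0 := rfl
      rw [show ((r:ZMod 2) + r) = r * 2 by ring, h2, mul_zero]
    · simp only [h, not_lt.2 h.le, asymm h, if_false, if_true]
      push_cast
      exact (CharTwo.neg_eq _).symm
  have : ((M.det : ℤ) : ZMod 2) = 0 := by
    have e1 := RingHom.map_det (Int.castRingHom (ZMod 2)) M
    have e2 := RingHom.map_det (Int.castRingHom (ZMod 2)) K
    simp only [RingHom.mapMatrix_apply] at e1 e2
    calc ((M.det : ℤ) : ZMod 2) = (M.map (Int.cast : ℤ → ZMod 2)).det := e1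
      _ = (K.map (Int.cast : ℤ → ZMod 2)).det := by rw [hcast]
      _ = ((K.det : ℤ) : ZMod 2) := e2.symm
      _ = 0 := by rw [hdK]; simp
  exact_mod_cast (ZMod.intCast_zmod_eq_zero_iff_dvd _ 2).1 this

lemma det_key : ∀ (k : ℕ) (n : Type) [Fintype n] [DecidableEq n]
    (N : Matrix n n (ZMod 4)), Fintype.card n = 2 * k → N.IsSymm →
    (∀ i, Even (N i i)) → N.det = 0 ∨ N.det = (-1) ^ k := by
  intro k
  induction k with
  | zero =>
    intro n _ _ N hcard _ _
    haveI : IsEmpty n := Fintype.card_eq_zero_iff.mp (by omega)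
    right; simp
  | succ k ih =>
    intro n _ _ N hcard hsymm hdiag
    by_cases hodd : ∃ i j, ¬ Even (N i j)
    · obtain ⟨i, j, hij⟩ := hodd
      have hNs : ∀ a b, N b a = N a b := fun a b => hsymm.apply a b
      have hne : i ≠ j := by rintro rfl; exact hij (hdiag i)
      -- build the equivalence
      set m' := {x : n // x ≠ i ∧ x ≠ j} with hm'
      set f : Fin 2 ⊕ m' → n := Sum.elim (fun a => if a = 0 then i else j) Subtype.val with hf
      have hfbij : Function.Bijective f := by
        constructor
        · rintro (a | x) (b | y) hxy
          · fin_cases a <;> fin_cases b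
            · rfl
            · exfalso
              have h' : i = j := by simpa [hf] using hxy
              exact hne h'
            · exfalso
              have h' : j = i := by simpa [hf] using hxy
              exact hne h'.symm
            · rfl
          · exfalso
            fin_cases a <;> simp [hf] at hxy <;>
              [exact y.2.1 hxy.symm; exact y.2.2 hxy.symm]
          · exfalso
            fin_cases b <;> simp [hf] at hxy <;>
              [exact x.2.1 hxy; exact x.2.2 hxy]
          · simp only [hf, Sum.elim_inr] at hxy
            exact congrArg Sum.inr (Subtype.ext hxy)
        · intro x
          by_cases hx1 : x = i
          · exact ⟨Sum.inl 0, by simp [hf, hx1]⟩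
          by_cases hx2 : x = j
          · exact ⟨Sum.inl 1, by simp [hf, hx2]⟩
          · exact ⟨Sum.inr ⟨x, hx1, hx2⟩, by simp [hf]⟩
      set e := Equiv.ofBijective f hfbij with he
      have he0 : e (Sum.inl 0) = i := by simp [he, hf, Equiv.ofBijective]
      have he1 : e (Sum.inl 1) = j := by simp [he, hf, Equiv.ofBijective]
      have her : ∀ x : m', e (Sum.inr x) = x.val := fun x => rfl
      have hcardm : Fintype.card m' = 2 * k := by
        have hc := Fintype.card_congr e
        simp only [Fintype.card_sum, Fintype.card_fin] at hc
        omega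
      set P := N.submatrix e e with hPdef
      have hPsymm : Pᵀ = P := by
        rw [hPdef, transpose_submatrix, hsymm]
      set A := P.toBlocks₁₁ with hA
      set B := P.toBlocks₁₂ with hB
      set C := P.toBlocks₂₁ with hC
      set D := P.toBlocks₂₂ with hD
      have hP : P = fromBlocks A B C D := (fromBlocks_toBlocks P).symm
      -- block symmetry facts
      have hAsymm : Aᵀ = A := by
        ext a b
        simp only [transpose_apply, hA, toBlocks₁₁, of_apply, hPdef, submatrix_apply]
        exact hNs _ _
      have hCB : Cᵀ = B := by
        ext a x
        simp only [transpose_apply, hC, hB, toBlocks₂₁, toBlocks₁₂, of_apply, hPdef,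
          submatrix_apply]
        exact hNs _ _
      have hDsymm : Dᵀ = D := by
        ext x y
        simp only [transpose_apply, hD, toBlocks₂₂, of_apply, hPdef, submatrix_apply]
        exact hNs _ _
      -- entries of A
      have hA00 : A 0 0 = N i i := by
        simp [hA, toBlocks₁₁, hPdef, he0]
      have hA01 : A 0 1 = N i j := by
        simp [hA, toBlocks₁₁, hPdef, he0, he1]
      have hA10 : A 1 0 = N j i := by
        simp [hA, toBlocks₁₁, hPdef, he0, he1]
      have hA11 : A 1 1 = N j j := by
        simp [hA, toBlocks₁₁, hPdef, he1]
      have hdetA : A.det = -1 := by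
        rw [det_fin_two, hA00, hA01, hA10, hA11, even_mul_even_zmod4 (hdiag i) (hdiag j),
          hNs i j, odd_sq_zmod4 hij]
        ring
      haveI : Invertible A := A.invertibleOfIsUnitDet (by rw [hdetA]; exact isUnit_one.neg)
      have hinv : ⅟A = (-1 : ZMod 4) • A.adjugate := by
        apply invOf_eq_right_inv
        rw [Matrix.mul_smul, Matrix.mul_adjugate, hdetA, smul_smul]
        norm_num
      have hinvsymm : (⅟A)ᵀ = ⅟A := by
        rw [hinv, transpose_smul, adjugate_transpose, hAsymm]
      set N' := D - C * ⅟A * B with hN'def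
      have hdet : N.det = -N'.det := by
        calc N.det = P.det := (det_submatrix_equiv_self e N).symm
          _ = A.det * N'.det := by rw [hP]; exact det_fromBlocks₁₁ A B C D
          _ = -N'.det := by rw [hdetA]; ring
      have hsymm' : N'.IsSymm := by
        rw [Matrix.IsSymm, hN'def, transpose_sub, hDsymm, transpose_mul, transpose_mul,
          hinvsymm, hCB, ← hCB, transpose_transpose, Matrix.mul_assoc]
      -- invOf entries
      have hi00 : ⅟A 0 0 = -(N j j) := by
        rw [hinv, adjugate_fin_two]; simp [hA11]
      have hi01 : ⅟A 0 1 = N i j := by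
        rw [hinv, adjugate_fin_two]; simp [hA01]
      have hi10 : ⅟A 1 0 = N j i := by
        rw [hinv, adjugate_fin_two]; simp [hA10]
      have hi11 : ⅟A 1 1 = -(N i i) := by
        rw [hinv, adjugate_fin_two]; simp [hA00]
      -- explicit entry of the Schur complement product
      have hCent : ∀ (x : m') (a : Fin 2), C x a = N x.val (if a = 0 then i else j) := by
        intro x a
        fin_cases a <;> simp [hC, toBlocks₂₁, hPdef, he0, he1, her]
      have hBent : ∀ (a : Fin 2) (x : m'), B a x = N (if a = 0 then i else j) x.val := by
        intro a x
        fin_cases a <;> simp [hB, toBlocks₁₂, hPdef, he0, he1, her]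
      have hprod : ∀ x y : m', (C * ⅟A * B) x y =
          N x.val i * (-(N j j)) * N i y.val + N x.val i * (N i j) * N j y.val
          + N x.val j * (N j i) * N i y.val + N x.val j * (-(N i i)) * N j y.val := by
        intro x y
        simp only [Matrix.mul_apply, Fin.sum_univ_two, Finset.sum_mul]
        rw [hCent x 0, hCent x 1, hBent 0 y, hBent 1 y, hi00, hi01, hi10, hi11]
        simp only [if_pos rfl]
        norm_num
        ring
      have hdiag' : ∀ x : m', Even (N' x x) := by
        intro x
        have hDxx : D x x = N x.val x.val := by simp [hD, toBlocks₂₂, hPdef, her]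
        rw [hN'def, Matrix.sub_apply, hDxx]
        refine (hdiag x.val).sub ?_
        obtain ⟨p, hp⟩ := hdiag i
        obtain ⟨q, hq⟩ := hdiag j
        refine ⟨-(q * (N x.val i * N x.val i)) + N x.val i * N i j * N x.val j
          - p * (N x.val j * N x.val j), ?_⟩
        rw [hprod x x, hp, hq, hNs i j, hNs i x.val, hNs j x.val]
        ring
      rcases ih m' N' hcardm hsymm' hdiag' with h0 | h1
      · left; rw [hdet, h0, neg_zero]
      · right; rw [hdet, h1, pow_succ]; ring
    · push_neg at hodd
      left
      choose R hR using hodd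
      have hNR : N = (2 : ZMod 4) • Matrix.of R := by
        ext a b
        simp only [Matrix.smul_apply, Matrix.of_apply, smul_eq_mul]
        rw [hR a b]; ring
      have h2 : (2 : ZMod 4) ^ (2 * (k + 1)) = 0 := by
        have he : 2 * (k + 1) = 2 * k + 2 := by ring
        have h4 : (2 : ZMod 4) ^ 2 = 0 := by decide
        rw [he, pow_add, h4, mul_zero]
      rw [hNR, det_smul, hcard, h2, zero_mul]

/-- `(−1)^((g−1)/2)·m ≡ 0, 1 (mod 4)` (Lemma 7 of the paper). -/
theorem m_is_discriminant
    {g : ℕ} (hg : Odd g) (M : Matrix (Fin g) (Fin g) ℤ)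
    (hsymm : M.IsSymm) (hdiag : ∀ i, Even (M i i)) (hdet : M.det ≠ 0)
    (α : Fin g → ℚ) (hα : IsDual M α) (m : ℤ)
    (hm : ∃ z : ℤ, (m : ℚ) / (2 * M.det) - qf M α = (z : ℚ)) :
    ((-1 : ℤ) ^ ((g - 1) / 2) * m) % 4 = 0 ∨ ((-1 : ℤ) ^ ((g - 1) / 2) * m) % 4 = 1 := by
  classical
  obtain ⟨z, hz⟩ := hm
  set Mq : Matrix (Fin g) (Fin g) ℚ := M.map (Int.cast : ℤ → ℚ) with hMq
  have hMqs : Mq.IsSymm := hsymm.map _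
  have hΔ : (M.det : ℚ) ≠ 0 := Int.cast_ne_zero.mpr hdet
  have hMqdet : Mq.det = (M.det : ℚ) := by
    have := RingHom.map_det (Int.castRingHom ℚ) M
    simpa [RingHom.mapMatrix_apply] using this.symm
  -- the integer vector c = Mα
  obtain ⟨cf, hcf⟩ : ∃ cf : (Fin g → ℤ) → ℤ, ∀ y : Fin g → ℤ,
      bform M α (fun i => (y i : ℚ)) = ((cf y : ℤ) : ℚ) := by
    choose cf hcf using hα
    exact ⟨cf, hcf⟩
  set c : Fin g → ℤ := fun j => cf (Pi.single j 1) with hcdef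
  set cq : Fin g → ℚ := fun j => (c j : ℚ) with hcq
  have hc : Mq *ᵥ α = cq := by
    ext jj
    have h1 := hcf (Pi.single jj 1)
    unfold bform at h1
    have hsingle : (fun i => (((Pi.single jj 1 : Fin g → ℤ) i : ℤ) : ℚ))
        = Pi.single jj (1 : ℚ) := by
      ext i
      by_cases h : i = jj
      · subst h; simp
      · simp [Pi.single_apply, h]
    simp only [hsingle, mulVec_single] at h1
    rw [← hMq] at h1
    show (Mq *ᵥ α) jj = ((cf (Pi.single jj 1) : ℤ) : ℚ)
    rw [← h1]
    simp only [Matrix.mulVec, dotProduct, mul_one, Pi.smul_apply, MulOpposite.op_one, one_smul,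
      Matrix.col_apply]
    exact Finset.sum_congr rfl fun i _ => by rw [hMqs.apply jj i, mul_comm]
  -- the bordered matrix
  set Bc : Matrix (Fin g) (Fin 1) ℤ := Matrix.of (fun i _ => c i) with hBc
  set Cc : Matrix (Fin 1) (Fin g) ℤ := Matrix.of (fun _ j => c j) with hCc
  set Mt : Matrix (Fin g ⊕ Fin 1) (Fin g ⊕ Fin 1) ℤ := fromBlocks M Bc Cc 0 with hMt
  have hMtsymm : Mt.IsSymm := by
    rw [Matrix.IsSymm]
    ext ii jj
    rw [transpose_apply]
    rcases ii with i | i <;> rcases jj with j | j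
    · simpa [hMt] using hsymm.apply i j
    · simp [hMt, hBc, hCc]
    · simp [hMt, hBc, hCc]
    · simp [hMt]
  have hMtdiag : ∀ ii, Even (Mt ii ii) := by
    rintro (ii | ii)
    · simpa [hMt] using hdiag ii
    · simp [hMt]
  -- determinant of the bordered matrix over ℚ
  haveI : Invertible Mq :=
    Mq.invertibleOfIsUnitDet (by rw [hMqdet]; exact isUnit_iff_ne_zero.2 hΔ)
  have hα' : ⅟Mq *ᵥ cq = α := by
    rw [invOf_eq_nonsing_inv, ← hc, mulVec_mulVec,
      Matrix.nonsing_inv_mul Mq (by rw [hMqdet]; exact isUnit_iff_ne_zero.2 hΔ), one_mulVec]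
  have hdetMt : ((Mt.det : ℤ) : ℚ) = -((M.det : ℚ) * (α ⬝ᵥ cq)) := by
    have hmap : Mt.map (Int.cast : ℤ → ℚ) =
        fromBlocks Mq (Matrix.of fun i (_ : Fin 1) => cq i)
          (Matrix.of fun (_ : Fin 1) j => cq j) 0 := by
      ext ii jj
      rcases ii with i | i <;> rcases jj with j | j <;>
        simp [hMt, hMq, hBc, hCc, hcq, Matrix.map_apply]
    have e1 : ((Mt.det : ℤ) : ℚ) = (Mt.map (Int.cast : ℤ → ℚ)).det := by
      have := RingHom.map_det (Int.castRingHom ℚ) Mt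
      simpa [RingHom.mapMatrix_apply] using this
    rw [e1, hmap, det_fromBlocks₁₁, hMqdet]
    have h1 : ∀ j, ((⅟Mq) * (Matrix.of fun i (_ : Fin 1) => cq i)) j 0 = α j := by
      intro j
      have := congrFun hα' j
      simpa [Matrix.mul_apply, Matrix.mulVec, dotProduct] using this
    have hCAB : ((Matrix.of fun (_ : Fin 1) j => cq j) * ⅟Mq
        * (Matrix.of fun i (_ : Fin 1) => cq i)) 0 0 = cq ⬝ᵥ α := by
      rw [Matrix.mul_assoc, Matrix.mul_apply]
      simp only [Matrix.of_apply]
      rw [show (∑ j, cq j * ((⅟Mq) * (Matrix.of fun i (_ : Fin 1) => cq i)) j 0)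
          = ∑ j, cq j * α j from Finset.sum_congr rfl fun j _ => by rw [h1 j]]
      rfl
    rw [det_fin_one]
    rw [Matrix.sub_apply, Matrix.zero_apply, zero_sub, hCAB, dotProduct_comm]
    try ring
  -- the congruence m = 2 Δ z - det Mt
  have hq : qf M α = (α ⬝ᵥ cq) / 2 := by
    rw [qf, bform, ← hMq, hc]
    try rfl
  have h2Δ : (2 * (M.det : ℚ)) ≠ 0 := by
    intro h; apply hΔ; linarith [h]
  have hdv : (m : ℚ) / (2 * (M.det : ℚ)) = (z : ℚ) + (α ⬝ᵥ cq) / 2 := by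
    rw [hq] at hz; push_cast at hz ⊢; linarith
  have hmq : (m : ℚ) = 2 * (M.det : ℚ) * z + (M.det : ℚ) * (α ⬝ᵥ cq) := by
    have h4 := (div_eq_iff h2Δ).1 hdv
    rw [h4]; ring
  have hmt : m = 2 * M.det * z - Mt.det := by
    have : ((m : ℤ) : ℚ) = ((2 * M.det * z - Mt.det : ℤ) : ℚ) := by
      push_cast [-Int.cast_det]
      rw [hmq, hdetMt]
      push_cast [-Int.cast_det]
      ring
    exact_mod_cast this
  -- apply the mod-4 determinant lemma
  obtain ⟨a, ha⟩ := hg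
  have hcard : Fintype.card (Fin g ⊕ Fin 1) = 2 * (a + 1) := by
    simp [Fintype.card_sum, ha]; omega
  set N4 : Matrix (Fin g ⊕ Fin 1) (Fin g ⊕ Fin 1) (ZMod 4) :=
    Mt.map (Int.cast : ℤ → ZMod 4) with hN4
  have hN4s : N4.IsSymm := hMtsymm.map _
  have hN4d : ∀ ii, Even (N4 ii ii) := by
    intro ii
    obtain ⟨r, hr⟩ := hMtdiag ii
    refine ⟨(r : ZMod 4), ?_⟩
    show ((Mt ii ii : ℤ) : ZMod 4) = _
    rw [hr]
    push_cast
    ring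
  have hdet4 : N4.det = ((Mt.det : ℤ) : ZMod 4) := by
    have := RingHom.map_det (Int.castRingHom (ZMod 4)) Mt
    simpa [RingHom.mapMatrix_apply] using this.symm
  obtain ⟨d', hd'⟩ := det_even_of_odd_rank ⟨a, ha⟩ M hsymm hdiag
  have hexp : (g - 1) / 2 = a := by omega
  rw [hexp]
  obtain ⟨q, hm4⟩ : ∃ q, m = 4 * q - Mt.det := ⟨d' * z, by rw [hmt, hd']; ring⟩
  rcases det_key (a + 1) _ N4 hcard hN4s hN4d with h0 | h1
  · -- 4 ∣ det Mt
    have hdvd : (4 : ℤ) ∣ Mt.det := by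
      have := (ZMod.intCast_zmod_eq_zero_iff_dvd Mt.det 4).1 (by rw [← hdet4]; exact h0)
      exact_mod_cast this
    rcases Nat.even_or_odd a with hpar | hpar
    · rw [hpar.neg_one_pow, one_mul]
      obtain ⟨w, hw⟩ := hdvd
      left; omega
    · rw [hpar.neg_one_pow]
      obtain ⟨w, hw⟩ := hdvd
      left; omega
  · -- det Mt ≡ (-1)^(a+1) mod 4
    have hcastpow : (((-1 : ℤ) ^ (a + 1) : ℤ) : ZMod 4) = (-1 : ZMod 4) ^ (a + 1) := by
      push_cast; ring
    have hmod : Mt.det % 4 = ((-1 : ℤ) ^ (a + 1)) % 4 := by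
      have : ((Mt.det : ℤ) : ZMod 4) = (((-1 : ℤ) ^ (a + 1) : ℤ) : ZMod 4) := by
        rw [← hdet4, h1, hcastpow]
      exact (ZMod.intCast_eq_intCast_iff _ _ _).1 this
    rcases Nat.even_or_odd a with hpar | hpar
    · rw [hpar.neg_one_pow, one_mul]
      rw [pow_succ, hpar.neg_one_pow, one_mul] at hmod
      right; omega
    · rw [hpar.neg_one_pow]
      rw [pow_succ, hpar.neg_one_pow] at hmod
      right
      have : (-1 : ℤ) * -1 = 1 := by ring
      rw [this] at hmod
      omega
end

section
/- Let α, β ∈ L' and let ℓ, m be integers with ℓ/Δ − ⟨α,β⟩ ∈ ℤ and m/(2Δ) − q(α) ∈ ℤ. Then mβ − ℓα ∈ ℤ^g. Moreover, if p is an odd prime with p ∤ Δ, p | m, and p | ℓ, then (m/p)·β − (ℓ/p)·α ∈ ℤ^g. -/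
open scoped BigOperators Classical

open Matrix

section Aux

variable {n R : Type*} [Fintype n] [DecidableEq n] [CommRing R]

omit [Fintype n] [CommRing R] in
lemma myUpdateColumn_comm (M : Matrix n n R) {i j : n}
    (hij : i ≠ j) (u v : n → R) :
    (M.updateCol j u).updateCol i v = (M.updateCol i v).updateCol j u := by
  ext s t
  simp only [updateCol_apply]
  split_ifs with h1 h2 <;> simp_all

lemma myMul_updateColumn (M N : Matrix n n R) (j : n) (c : n → R) :
    M * (N.updateCol j c) = (M * N).updateCol j (M *ᵥ c) := by
  ext s t
  simp only [mul_apply, updateCol_apply, Matrix.mulVec, dotProduct]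
  split_ifs <;> rfl

omit [Fintype n] [CommRing R] in
lemma one_col [One R] [Zero R] (t : n) :
    (fun s => (1 : Matrix n n R) s t) = Pi.single t 1 := by
  ext s; simp [one_apply, Pi.single_apply, eq_comm]

omit [Fintype n] in
lemma upd_single_self (M : Matrix n n R) (t : n) (h : (fun s => M s t) = Pi.single t 1) :
    M.updateCol t (Pi.single t 1) = M := by
  rw [← h]; exact updateCol_eq_self M t

lemma det_id_case {i j : n} (hij : i ≠ j) :
    det (((1 : Matrix n n R).updateCol i (Pi.single i 1)).updateCol j (Pi.single j 1)) = 1 := by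
  rw [upd_single_self, upd_single_self, det_one]
  · exact one_col i
  · ext s; simp [updateCol_apply, hij.symm, one_apply, Pi.single_apply, eq_comm]

lemma det_swap_case {i j : n} (hij : i ≠ j) :
    det (((1 : Matrix n n R).updateCol i (Pi.single j 1)).updateCol j (Pi.single i 1)) = -1 := by
  have h : ((1 : Matrix n n R).updateCol i (Pi.single j 1)).updateCol j (Pi.single i 1)
      = (1 : Matrix n n R).submatrix id (Equiv.swap i j) := by
    ext s t
    rcases eq_or_ne t j with rfl | htj
    · simp [updateCol_apply, Equiv.swap_apply_right, one_apply, Pi.single_apply, eq_comm]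
    · rcases eq_or_ne t i with rfl | hti
      · simp [updateCol_apply, htj, Equiv.swap_apply_left, one_apply, Pi.single_apply, eq_comm]
      · simp [updateCol_apply, htj, hti, Equiv.swap_apply_of_ne_of_ne hti htj, one_apply]
  rw [h, det_permute', Equiv.Perm.sign_swap hij, det_one]
  simp

lemma det_zero_case_eq {i j : n} (hij : i ≠ j) (l : n) :
    det (((1 : Matrix n n R).updateCol i (Pi.single l 1)).updateCol j (Pi.single l 1)) = 0 :=
  det_zero_of_column_eq hij (fun s => by simp [updateCol_apply, hij, hij.symm])

lemma det_zero_case_l {i j : n} (hij : i ≠ j) {l : n} (hli : l ≠ i) (hlj : l ≠ j) (u : n → R) :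
    det (((1 : Matrix n n R).updateCol i (Pi.single l 1)).updateCol j u) = 0 := by
  refine det_zero_of_column_eq hli.symm (fun s => ?_)
  simp [updateCol_apply, hli.symm, hlj.symm, hij, one_apply, Pi.single_apply, eq_comm]

lemma det_zero_case_k {i j : n} (hij : i ≠ j) {k : n} (hki : k ≠ i) (hkj : k ≠ j) (u : n → R) :
    det (((1 : Matrix n n R).updateCol i u).updateCol j (Pi.single k 1)) = 0 := by
  refine det_zero_of_column_eq hkj.symm (fun s => ?_)
  simp [updateCol_apply, hki.symm, hkj.symm, hij.symm, one_apply, Pi.single_apply, eq_comm]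

lemma base_det {i j : n} (hij : i ≠ j) (l k : n) :
    det (((1 : Matrix n n R).updateCol i (Pi.single l 1)).updateCol j (Pi.single k 1))
      = (if l = i ∧ k = j then 1 else 0) - (if l = j ∧ k = i then 1 else 0) := by
  rcases eq_or_ne l k with rfl | hlk
  · rw [det_zero_case_eq hij]
    have h1 : ¬(l = i ∧ l = j) := fun h => hij (h.1.symm.trans h.2)
    have h2 : ¬(l = j ∧ l = i) := fun h => hij (h.2.symm.trans h.1)
    rw [if_neg h1, if_neg h2, sub_zero]
  rcases eq_or_ne l i with hli | hli
  · rcases eq_or_ne k j with hkj | hkj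
    · rw [hli, hkj, det_id_case hij, if_pos ⟨rfl, rfl⟩,
        if_neg (fun h => hij h.1), sub_zero]
    · rw [det_zero_case_k hij (fun h => hlk (hli.trans h.symm)) hkj,
        if_neg (fun h => hkj h.2), if_neg (fun h => hij (hli.symm.trans h.1)), sub_zero]
  rcases eq_or_ne l j with hlj | hlj
  · rcases eq_or_ne k i with hki | hki
    · rw [hlj, hki, det_swap_case hij, if_neg (fun h => hij h.1.symm), if_pos ⟨rfl, rfl⟩]
      ring
    · rw [det_zero_case_k hij hki (fun h => hlk (hlj.trans h.symm)),
        if_neg (fun h => hli h.1), if_neg (fun h => hki h.2), sub_zero]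
  · rw [det_zero_case_l hij hli hlj, if_neg (fun h => hli h.1), if_neg (fun h => hlj h.1),
      sub_zero]

lemma det_expand_column (N : Matrix n n R) (t : n) (w : n → R) :
    det (N.updateCol t w) = ∑ l, w l * det (N.updateCol t (Pi.single l 1)) := by
  have hw : w = ∑ l, w l • (Pi.single l 1 : n → R) := by
    funext s
    simp [Pi.single_apply, Finset.sum_ite_eq']
  rw [← cramer_apply]
  conv_lhs => rw [hw]
  rw [map_sum]
  simp [cramer_apply, Finset.sum_apply]

lemma det_one_upd_upd {i j : n} (hij : i ≠ j) (u v : n → R) :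
    det (((1 : Matrix n n R).updateCol j u).updateCol i v)
      = u j * v i - u i * v j := by
  rw [det_expand_column]
  have h : ∀ l, det (((1 : Matrix n n R).updateCol j u).updateCol i (Pi.single l 1))
      = ∑ k, u k * ((if l = i ∧ k = j then (1:R) else 0) - (if l = j ∧ k = i then 1 else 0)) := by
    intro l
    rw [myUpdateColumn_comm _ hij, det_expand_column]
    exact Finset.sum_congr rfl fun k _ => by rw [base_det hij l k]
  simp_rw [h]
  simp only [mul_sub, mul_ite, mul_one, mul_zero, Finset.sum_sub_distrib, ite_and,
    Finset.mul_sum, Finset.sum_ite_eq', Finset.mem_univ, if_true]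
  simp [Finset.sum_ite_eq, Finset.sum_ite_eq', apply_ite, hij, hij.symm]
  ring

end Aux

lemma minor_dvd {g : ℕ} (M : Matrix (Fin g) (Fin g) ℤ) (hdet : M.det ≠ 0) {i j : Fin g}
    (hij : i ≠ j) (a b : Fin g → ℤ) :
    M.det ∣ (M.adjugate *ᵥ a) j * (M.adjugate *ᵥ b) i
      - (M.adjugate *ᵥ a) i * (M.adjugate *ᵥ b) j := by
  set u := M.adjugate *ᵥ a with hu
  set v := M.adjugate *ᵥ b with hv
  set E := ((1 : Matrix (Fin g) (Fin g) ℤ).updateCol j u).updateCol i v with hE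
  have hMu : M *ᵥ u = M.det • a := by
    rw [hu, mulVec_mulVec, mul_adjugate, smul_mulVec, one_mulVec]
  have hMv : M *ᵥ v = M.det • b := by
    rw [hv, mulVec_mulVec, mul_adjugate, smul_mulVec, one_mulVec]
  have hME : M * E = ((M.updateCol j (M.det • a)).updateCol i (M.det • b)) := by
    rw [hE, myMul_updateColumn, myMul_updateColumn, mul_one, hMu, hMv]
  have hdetME : det (M * E) = M.det * (M.det
      * det ((M.updateCol j a).updateCol i b)) := by
    rw [hME, det_updateCol_smul, myUpdateColumn_comm _ hij, det_updateCol_smul,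
      myUpdateColumn_comm _ hij.symm]
  have hcancel : det E = M.det * det ((M.updateCol j a).updateCol i b) := by
    have h1 : M.det * det E = M.det * (M.det * det ((M.updateCol j a).updateCol i b)) := by
      rw [← det_mul, hdetME]
    exact mul_left_cancel₀ hdet h1
  have h2 : det E = u j * v i - u i * v j := det_one_upd_upd hij u v
  exact ⟨_, h2 ▸ hcancel⟩

/-- `mβ − ℓα ∈ ℤ^g`, and `(m/p)β − (ℓ/p)α ∈ ℤ^g` for odd primes `p ∤ Δ`
with `p | m` and `p | ℓ`. -/
theorem m_beta_sub_ell_alpha_integral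
    {g : ℕ} (hg : 0 < g) (M : Matrix (Fin g) (Fin g) ℤ)
    (hsymm : M.IsSymm) (hdiag : ∀ i, Even (M i i)) (hdet : M.det ≠ 0)
    (α β : Fin g → ℚ) (hα : IsDual M α) (hβ : IsDual M β)
    (ℓ m : ℤ)
    (hℓ : ∃ z : ℤ, (ℓ : ℚ) / (M.det : ℚ) - bform M α β = (z : ℚ))
    (hm : ∃ z : ℤ, (m : ℚ) / (2 * M.det) - qf M α = (z : ℚ)) :
    (∃ x : Fin g → ℤ, ∀ i, (m : ℚ) * β i - (ℓ : ℚ) * α i = (x i : ℚ)) ∧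
      (∀ p : ℕ, p.Prime → Odd p → ¬ ((p : ℤ) ∣ M.det) → (p : ℤ) ∣ m → (p : ℤ) ∣ ℓ →
        ∃ x : Fin g → ℤ, ∀ i,
          ((m / (p : ℤ) : ℤ) : ℚ) * β i - ((ℓ / (p : ℤ) : ℤ) : ℚ) * α i = (x i : ℚ)) := by
  classical
  have hΔ : ((M.det : ℚ)) ≠ 0 := Int.cast_ne_zero.mpr hdet
  have hMqsymm : ∀ s t, (M.map (Int.cast : ℤ → ℚ)) s t = (M.map (Int.cast : ℤ → ℚ)) t s := by
    intro s t
    simp only [Matrix.map_apply]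
    exact_mod_cast hsymm.apply t s
  have hdual : ∀ (x : Fin g → ℚ), IsDual M x →
      ∀ i, ∃ z : ℤ, ((M.map (Int.cast : ℤ → ℚ)) *ᵥ x) i = (z : ℚ) := by
    intro x hx i
    obtain ⟨z, hz⟩ := hx (Pi.single i 1)
    refine ⟨z, ?_⟩
    rw [← hz]
    simp only [bform]
    have hs : (fun t => ((Pi.single i 1 : Fin g → ℤ) t : ℚ)) = Pi.single i (1 : ℚ) := by
      funext t; simp [Pi.single_apply]
    rw [hs, Matrix.mulVec_single]
    simp only [Matrix.mulVec, dotProduct]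
    refine Finset.sum_congr rfl fun t _ => ?_
    rw [hMqsymm i t]; simp [mul_comm]
  choose a0 ha0 using hdual α hα
  choose b0 hb0 using hdual β hβ
  have hMqdet : (M.map (Int.cast : ℤ → ℚ)).det = (M.det : ℚ) := by
    have h := (Int.castRingHom ℚ).map_det M
    rw [RingHom.mapMatrix_apply] at h
    exact h.symm
  have hadj : (M.map (Int.cast : ℤ → ℚ)).adjugate
      = (M.adjugate).map (Int.cast : ℤ → ℚ) := by
    have h := (Int.castRingHom ℚ).map_adjugate M
    rw [RingHom.mapMatrix_apply, RingHom.mapMatrix_apply] at h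
    exact_mod_cast h.symm
  set u := M.adjugate *ᵥ a0 with hu
  set v := M.adjugate *ᵥ b0 with hv
  have hcast : ∀ (w : Fin g → ℤ) (i : Fin g), ((M.adjugate *ᵥ w) i : ℚ)
      = ((M.map (Int.cast : ℤ → ℚ)).adjugate *ᵥ (fun t => (w t : ℚ))) i := by
    intro w i
    rw [hadj]
    simp only [Matrix.mulVec, dotProduct, Matrix.map_apply]
    push_cast
    rfl
  have hkey : ∀ (x : Fin g → ℚ) (w0 : Fin g → ℤ),
      (∀ i, ((M.map (Int.cast : ℤ → ℚ)) *ᵥ x) i = (w0 i : ℚ)) →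
      ∀ i, ((M.adjugate *ᵥ w0) i : ℚ) = (M.det : ℚ) * x i := by
    intro x w0 hw0 i
    rw [hcast]
    have h1 : (fun t => ((w0 t : ℚ))) = (M.map (Int.cast : ℤ → ℚ)) *ᵥ x := by
      funext t; rw [hw0 t]
    rw [h1, Matrix.mulVec_mulVec, Matrix.adjugate_mul, hMqdet, Matrix.smul_mulVec,
      Matrix.one_mulVec]
    simp
  have hαu : ∀ i, ((u i : ℚ)) = (M.det : ℚ) * α i := hkey α a0 ha0
  have hβv : ∀ i, ((v i : ℚ)) = (M.det : ℚ) * β i := hkey β b0 hb0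
  have hSα : (M.det : ℚ) * bform M α α = ((u ⬝ᵥ a0 : ℤ) : ℚ) := by
    simp only [bform]
    have h1 : (M.map (Int.cast : ℤ → ℚ)) *ᵥ α = fun t => (a0 t : ℚ) := funext ha0
    rw [h1]
    simp only [dotProduct]
    push_cast
    rw [Finset.mul_sum]
    refine Finset.sum_congr rfl fun t _ => ?_
    rw [hαu t, ← hMqdet]
    ring
  have hTαβ : (M.det : ℚ) * bform M α β = ((u ⬝ᵥ b0 : ℤ) : ℚ) := by
    simp only [bform]
    have h1 : (M.map (Int.cast : ℤ → ℚ)) *ᵥ β = fun t => (b0 t : ℚ) := funext hb0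
    rw [h1]
    simp only [dotProduct]
    push_cast
    rw [Finset.mul_sum]
    refine Finset.sum_congr rfl fun t _ => ?_
    rw [hαu t, ← hMqdet]
    ring
  obtain ⟨z, hz⟩ := hm
  have hmq : (m : ℚ) = ((u ⬝ᵥ a0 : ℤ) : ℚ) + 2 * (M.det : ℚ) * z := by
    rw [← hSα]
    simp only [qf] at hz
    have h2 : (m : ℚ) / (2 * (M.det : ℚ)) = (z : ℚ) + bform M α α / 2 := by
      rw [← hz]; ring
    have h3 : (2 * (M.det : ℚ)) ≠ 0 := mul_ne_zero two_ne_zero hΔ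
    field_simp at h2
    linarith
  have hmint : m = u ⬝ᵥ a0 + 2 * M.det * z := by exact_mod_cast hmq
  obtain ⟨w, hw⟩ := hℓ
  have hlq : (ℓ : ℚ) = ((u ⬝ᵥ b0 : ℤ) : ℚ) + (M.det : ℚ) * w := by
    rw [← hTαβ]
    have h2 : (ℓ : ℚ) / (M.det : ℚ) = (w : ℚ) + bform M α β := by
      rw [← hw]; ring
    field_simp at h2
    linarith
  have hlint : ℓ = u ⬝ᵥ b0 + M.det * w := by exact_mod_cast hlq
  have hAsym : ∀ s t, M.adjugate s t = M.adjugate t s := by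
    intro s t
    have h := Matrix.adjugate_transpose M
    rw [hsymm.eq] at h
    calc M.adjugate s t = M.adjugateᵀ t s := rfl
      _ = M.adjugate t s := by rw [h]
  have hub0 : u ⬝ᵥ b0 = ∑ t, a0 t * v t := by
    simp only [hu, hv, dotProduct, Matrix.mulVec, Finset.sum_mul, Finset.mul_sum]
    rw [Finset.sum_comm]
    refine Finset.sum_congr rfl fun t _ => Finset.sum_congr rfl fun s _ => ?_
    rw [hAsym s t]; ring
  have hua0 : u ⬝ᵥ a0 = ∑ t, a0 t * u t := by
    simp [dotProduct, mul_comm]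
  have hdvdkey : ∀ (i : Fin g), M.det ∣ ∑ t, a0 t * (u t * v i - u i * v t) := by
    intro i
    refine Finset.dvd_sum fun t _ => ?_
    rcases eq_or_ne i t with rfl | hit
    · have h0 : u i * v i - u i * v i = 0 := by ring
      rw [h0, mul_zero]
      exact dvd_zero _
    · exact Dvd.dvd.mul_left (minor_dvd M hdet hit a0 b0) _
  have hdvd1 : ∀ i, M.det ∣ m * v i - ℓ * u i := by
    intro i
    have he : ∑ t, a0 t * (u t * v i - u i * v t)
        = (∑ t, a0 t * u t) * v i - (∑ t, a0 t * v t) * u i := by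
      rw [Finset.sum_mul, Finset.sum_mul, ← Finset.sum_sub_distrib]
      exact Finset.sum_congr rfl fun t _ => by ring
    have hexp : m * v i - ℓ * u i
        = (∑ t, a0 t * (u t * v i - u i * v t)) + M.det * (2 * z * v i - w * u i) := by
      rw [he, hmint, hlint, hua0, hub0]
      ring
    rw [hexp]
    exact dvd_add (hdvdkey i) (Dvd.intro _ rfl)
  have hmain : ∀ m' ℓ' : ℤ, (∀ i, M.det ∣ m' * v i - ℓ' * u i) →
      ∃ x : Fin g → ℤ, ∀ i, (m' : ℚ) * β i - (ℓ' : ℚ) * α i = (x i : ℚ) := by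
    intro m' ℓ' hd
    refine ⟨fun i => (m' * v i - ℓ' * u i) / M.det, fun i => ?_⟩
    have hxi : M.det * ((m' * v i - ℓ' * u i) / M.det) = m' * v i - ℓ' * u i :=
      Int.mul_ediv_cancel' (hd i)
    apply mul_left_cancel₀ hΔ
    have h1 : (M.det : ℚ) * ((m' : ℚ) * β i - (ℓ' : ℚ) * α i)
        = (m' : ℚ) * ((M.det : ℚ) * β i) - (ℓ' : ℚ) * ((M.det : ℚ) * α i) := by ring
    rw [h1, ← hβv i, ← hαu i]
    have h2 : (M.det : ℚ) * ((((m' * v i - ℓ' * u i) / M.det : ℤ)) : ℚ)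
        = ((M.det * ((m' * v i - ℓ' * u i) / M.det) : ℤ) : ℚ) := by push_cast; ring
    rw [h2, hxi]
    push_cast
    ring
  constructor
  · exact hmain m ℓ hdvd1
  · intro p pp _ hpΔ hpm hpl
    have hdvd2 : ∀ i, M.det ∣ (m / (p : ℤ)) * v i - (ℓ / (p : ℤ)) * u i := by
      intro i
      have hpint : Prime ((p : ℕ) : ℤ) := Nat.prime_iff_prime_int.mp pp
      have hco : IsCoprime (M.det) ((p : ℕ) : ℤ) :=
        ((hpint.coprime_iff_not_dvd).mpr hpΔ).symm
      refine hco.dvd_of_dvd_mul_right ?_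
      have h1 : ((p : ℕ) : ℤ) * (m / (p : ℤ)) = m := Int.mul_ediv_cancel' hpm
      have h2 : ((p : ℕ) : ℤ) * (ℓ / (p : ℤ)) = ℓ := Int.mul_ediv_cancel' hpl
      have he : ((m / (p : ℤ)) * v i - (ℓ / (p : ℤ)) * u i) * ((p : ℕ) : ℤ)
          = m * v i - ℓ * u i := by
        calc ((m / (p : ℤ)) * v i - (ℓ / (p : ℤ)) * u i) * ((p : ℕ) : ℤ)
            = (((p : ℕ) : ℤ) * (m / (p : ℤ))) * v i
              - (((p : ℕ) : ℤ) * (ℓ / (p : ℤ))) * u i := by ring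
          _ = m * v i - ℓ * u i := by rw [h1, h2]
      rw [he]
      exact hdvd1 i
    exact hmain (m / (p : ℤ)) (ℓ / (p : ℤ)) hdvd2
end

section
/- Suppose g is odd, so that Δ is even. Let α, β ∈ L' and let ℓ, m, n be integers such that m̃ := m/(2Δ) − q(α) and ℓ̃ := ℓ/Δ − ⟨α,β⟩ are integers. For an integer u ≥ 1 and an integer d with gcd(d,u) = 1, set 𝒮(d,u) = Σ_{v mod u} Σ_{r ∈ (ℤ/uℤ)^g} e_u(d·f(v,r)), where f(v,r) = m̃v² − ⟨α,r⟩v − q(r) + ⟨β,r⟩ − ℓ̃v. If gcd(m,u) does not divide ℓ, then 𝒮(d,u) = 0. -/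
open scoped BigOperators Classical

section Lemmas

variable {g : ℕ} (M : Matrix (Fin g) (Fin g) ℤ)

lemma bform_add_left (x y z : Fin g → ℚ) :
    bform M (x + y) z = bform M x z + bform M y z := by
  simp [bform, add_dotProduct]

lemma bform_add_right (x y z : Fin g → ℚ) :
    bform M x (y + z) = bform M x y + bform M x z := by
  simp [bform, Matrix.mulVec_add, dotProduct_add]

lemma bform_smul_left (t : ℚ) (x y : Fin g → ℚ) :
    bform M (t • x) y = t * bform M x y := by
  simp [bform, smul_dotProduct, smul_eq_mul]

lemma bform_smul_right (t : ℚ) (x y : Fin g → ℚ) :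
    bform M x (t • y) = t * bform M x y := by
  simp [bform, Matrix.mulVec_smul, dotProduct_smul, smul_eq_mul]

lemma bform_comm (hsymm : M.IsSymm) (x y : Fin g → ℚ) :
    bform M x y = bform M y x := by
  have hMq : Matrix.transpose (M.map (Int.cast : ℤ → ℚ)) = M.map (Int.cast : ℤ → ℚ) := by
    ext i j
    simp [Matrix.transpose_apply, Matrix.map_apply, hsymm.apply]
  rw [bform, Matrix.dotProduct_mulVec, ← Matrix.mulVec_transpose, hMq, bform,
    dotProduct_comm]

lemma bform_intcast (x y : Fin g → ℤ) :
    bform M (fun i => (x i : ℚ)) (fun i => (y i : ℚ))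
      = ((dotProduct x (M.mulVec y) : ℤ) : ℚ) := by
  simp only [bform, dotProduct, Matrix.mulVec, Matrix.map_apply]
  push_cast
  rfl

lemma qf_smul (t : ℚ) (x : Fin g → ℚ) : qf M (t • x) = t ^ 2 * qf M x := by
  simp only [qf, bform_smul_left, bform_smul_right]
  ring

lemma ec_add (c : ℤ) (x y : ℚ) : ec c (x + y) = ec c x * ec c y := by
  rw [ec, ec, ec, ← Complex.exp_add]
  congr 1
  push_cast
  ring

lemma ec_u_mul_int (u : ℕ) (hu : u ≠ 0) (k : ℤ) : ec (u : ℤ) ((u : ℚ) * (k : ℚ)) = 1 := by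
  rw [ec]
  have hu' : ((u : ℤ) : ℂ) ≠ 0 := by exact_mod_cast Nat.cast_ne_zero.mpr hu
  have h : 2 * (Real.pi : ℂ) * Complex.I * (((u : ℚ) * (k : ℚ) : ℚ) : ℂ) / (((u : ℤ)) : ℂ)
      = (k : ℤ) * (2 * (Real.pi : ℂ) * Complex.I) := by
    rw [div_eq_iff hu']
    push_cast
    ring
  rw [h, Complex.exp_int_mul_two_pi_mul_I]

lemma ec_scale (u : ℕ) (cI eI : ℤ) (hu : (u : ℤ) = cI * eI) (hc : cI ≠ 0) (hu0 : u ≠ 0)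
    (x : ℚ) : ec (u : ℤ) ((eI : ℚ) * x) = ec cI x := by
  have he : eI ≠ 0 := by
    intro h; rw [h, mul_zero] at hu; exact hu0 (by exact_mod_cast hu)
  rw [ec, ec]
  congr 1
  have hu' : ((u : ℤ) : ℂ) = (cI : ℂ) * (eI : ℂ) := by exact_mod_cast hu
  have hcC : (cI : ℂ) ≠ 0 := Int.cast_ne_zero.mpr hc
  have heC : (eI : ℂ) ≠ 0 := Int.cast_ne_zero.mpr he
  rw [hu']
  rw [div_eq_div_iff (by exact mul_ne_zero hcC heC) hcC]
  push_cast
  ring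

end Lemmas

section Lemmas2
variable {g : ℕ} (M : Matrix (Fin g) (Fin g) ℤ)

/-- the skew-symmetrization used for parity arguments -/
def skewA (M : Matrix (Fin g) (Fin g) ℤ) : Matrix (Fin g) (Fin g) ℤ :=
  Matrix.of fun i j => if i < j then M i j else if j < i then -(M i j) else 0

lemma skewA_transpose (hsymm : M.IsSymm) :
    Matrix.transpose (skewA M) = -(skewA M) := by
  ext i j
  simp only [Matrix.transpose_apply, Matrix.neg_apply, skewA, Matrix.of_apply]
  rcases lt_trichotomy i j with h | h | h
  · simp [h, not_lt.mpr h.le, hsymm.apply, h.ne']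
  · simp [h]
  · simp [h, not_lt.mpr h.le, hsymm.apply, h.ne']

lemma skewA_cast (hsymm : M.IsSymm) (hdiag : ∀ i, Even (M i i)) (i j : Fin g) :
    ((M i j : ZMod 2)) = ((skewA M i j : ZMod 2)) := by
  simp only [skewA, Matrix.of_apply]
  rcases lt_trichotomy i j with h | h | h
  · simp [h]
  · subst h
    simp only [lt_irrefl, if_false, Int.cast_zero]
    exact (ZMod.intCast_zmod_eq_zero_iff_dvd _ 2).mpr (by exact_mod_cast (hdiag i).two_dvd)
  · have h2 : ¬ i < j := not_lt.mpr h.le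
    simp only [h2, if_false, h, if_true, Int.cast_neg]
    rw [CharTwo.neg_eq]

lemma skewA_quad_zero (hsymm : M.IsSymm) (x : Fin g → ℤ) :
    dotProduct x ((skewA M).mulVec x) = 0 := by
  have h1 : dotProduct x ((skewA M).mulVec x)
      = dotProduct (Matrix.vecMul x (skewA M)) x := Matrix.dotProduct_mulVec x _ x
  have h2 : Matrix.vecMul x (skewA M) = -( (skewA M).mulVec x ) := by
    rw [← Matrix.mulVec_transpose, skewA_transpose M hsymm, Matrix.neg_mulVec]
  rw [h2, neg_dotProduct, dotProduct_comm] at h1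
  rw [dotProduct_comm]
  linarith

lemma even_quad (hsymm : M.IsSymm) (hdiag : ∀ i, Even (M i i)) (x : Fin g → ℤ) :
    Even (dotProduct x (M.mulVec x)) := by
  have h1 : ((dotProduct x (M.mulVec x) : ℤ) : ZMod 2)
      = ((dotProduct x ((skewA M).mulVec x) : ℤ) : ZMod 2) := by
    simp only [dotProduct, Matrix.mulVec]
    push_cast
    refine Finset.sum_congr rfl fun i _ => ?_
    refine congrArg _ (Finset.sum_congr rfl fun j _ => ?_)
    rw [skewA_cast M hsymm hdiag]
  have h0 : ((2:ℕ):ℤ) ∣ dotProduct x (M.mulVec x) := by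
    rw [← ZMod.intCast_zmod_eq_zero_iff_dvd, h1, skewA_quad_zero M hsymm, Int.cast_zero]
  rcases h0 with ⟨k, hk⟩
  exact ⟨k, by omega⟩

lemma even_det (hg : Odd g) (hsymm : M.IsSymm) (hdiag : ∀ i, Even (M i i)) :
    (2 : ℤ) ∣ M.det := by
  have hA : (skewA M).det = 0 := by
    have h1 : (skewA M).det = (-(skewA M)).det := by
      rw [← skewA_transpose M hsymm, Matrix.det_transpose]
    rw [Matrix.det_neg, Fintype.card_fin, Odd.neg_one_pow hg, neg_one_mul] at h1
    omega
  rw [show (2:ℤ) = ((2:ℕ):ℤ) from rfl, ← ZMod.intCast_zmod_eq_zero_iff_dvd]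
  have hdc : ∀ (N : Matrix (Fin g) (Fin g) ℤ),
      ((N.det : ZMod 2)) = (N.map (Int.cast : ℤ → ZMod 2)).det := fun N => by
    rw [show ((N.det : ZMod 2)) = (Int.castRingHom (ZMod 2)) N.det from rfl,
      RingHom.map_det, RingHom.mapMatrix_apply]
    rfl
  have hMA : M.map (Int.cast : ℤ → ZMod 2) = (skewA M).map (Int.cast : ℤ → ZMod 2) := by
    ext i j
    exact skewA_cast M hsymm hdiag i j
  rw [hdc, hMA, ← hdc, hA, Int.cast_zero]

lemma qf_int (hsymm : M.IsSymm) (hdiag : ∀ i, Even (M i i)) (x : Fin g → ℤ) :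
    ∃ z : ℤ, qf M (fun i => (x i : ℚ)) = (z : ℚ) := by
  obtain ⟨z, hz⟩ := even_quad M hsymm hdiag x
  refine ⟨z, ?_⟩
  rw [qf, bform_intcast, hz]
  push_cast
  ring

end Lemmas2

section Lemmas3
variable {g : ℕ} (M : Matrix (Fin g) (Fin g) ℤ)

lemma exists_dual_rep (hsymm : M.IsSymm) (α : Fin g → ℚ) (hα : IsDual M α) :
    ∃ a : Fin g → ℤ, ∀ i, (a i : ℚ) = (M.det : ℚ) * α i := by
  classical
  set Mq : Matrix (Fin g) (Fin g) ℚ := M.map (Int.cast : ℤ → ℚ) with hMqdef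
  choose w hw using fun j => hα (Pi.single j 1)
  have hwv : Mq.mulVec α = fun j => (w j : ℚ) := by
    funext j
    have h1 := hw j
    have hsingle : (fun i => (((Pi.single j 1 : Fin g → ℤ)) i : ℚ)) = Pi.single j (1 : ℚ) := by
      funext i
      by_cases h : i = j <;> simp [Pi.single_apply, h]
    rw [hsingle] at h1
    have h2 : bform M α (Pi.single j (1:ℚ)) = Mq.mulVec α j := by
      simp only [bform, dotProduct, Matrix.mulVec, Pi.single_apply, mul_ite, mul_one,
        mul_zero, Finset.sum_ite_eq', Finset.mem_univ, if_true]
      refine Finset.sum_congr rfl fun i _ => ?_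
      rw [show Mq j i = Mq i j from by
        simp only [hMqdef, Matrix.map_apply]; rw [hsymm.apply]]
      ring
    rw [← h2, h1]
  refine ⟨fun i => ∑ j, M.adjugate i j * w j, fun i => ?_⟩
  have hadj : Mq.adjugate.mulVec (Mq.mulVec α) = Mq.det • α := by
    rw [Matrix.mulVec_mulVec, Matrix.adjugate_mul, Matrix.smul_mulVec,
      Matrix.one_mulVec]
  have hdet : Mq.det = (M.det : ℚ) := by
    rw [hMqdef, show M.map (Int.cast : ℤ → ℚ) = (Int.castRingHom ℚ).mapMatrix M from rfl,
      ← RingHom.map_det]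
    rfl
  have hadje : ∀ i j, Mq.adjugate i j = (M.adjugate i j : ℚ) := by
    intro i j
    rw [hMqdef, show (M.map (Int.cast : ℤ → ℚ)) = (Int.castRingHom ℚ).mapMatrix M from rfl,
      ← RingHom.map_adjugate]
    rfl
  have := congrFun hadj i
  rw [Pi.smul_apply, smul_eq_mul, hdet] at this
  rw [← this, hwv]
  simp only [Matrix.mulVec, dotProduct, hadje]
  push_cast
  rfl

lemma fval_shift (α β : Fin g → ℚ) (ℓ m : ℤ) (hsymm : M.IsSymm)
    (v t : ℤ) (r s : Fin g → ℤ) :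
    fval M α β ℓ m (v + t) (r + s)
      = fval M α β ℓ m v r
        + ((m : ℚ) / (2 * M.det) - qf M α) * (2 * t * v + t ^ 2)
        - bform M α (fun i => (s i : ℚ)) * ((v : ℚ) + t)
        - bform M α (fun i => (r i : ℚ)) * t
        - bform M (fun i => (r i : ℚ)) (fun i => (s i : ℚ))
        - qf M (fun i => (s i : ℚ))
        + bform M β (fun i => (s i : ℚ))
        - ((ℓ : ℚ) / (M.det : ℚ) - bform M α β) * t := by
  have hcast : (fun i => (((r + s) i : ℤ) : ℚ))
      = (fun i => (r i : ℚ)) + (fun i => (s i : ℚ)) := by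
    funext i
    simp [Pi.add_apply]
  unfold fval qf
  rw [hcast]
  simp only [bform_add_left, bform_add_right]
  rw [bform_comm M hsymm (fun i => (s i : ℚ)) (fun i => (r i : ℚ))]
  push_cast
  ring

end Lemmas3

section Lemmas4
variable {g : ℕ} (M : Matrix (Fin g) (Fin g) ℤ)

lemma ec_fval_congr (hsymm : M.IsSymm) (hdiag : ∀ i, Even (M i i))
    (α β : Fin g → ℚ) (ℓ m : ℤ)
    (hm : ∃ z : ℤ, (m : ℚ) / (2 * M.det) - qf M α = (z : ℚ))
    (hℓ : ∃ z : ℤ, (ℓ : ℚ) / (M.det : ℚ) - bform M α β = (z : ℚ))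
    (hα : IsDual M α) (hβ : IsDual M β)
    (u : ℕ) (hu : u ≠ 0) (d : ℤ) (v v' : ℤ) (r r' : Fin g → ℤ)
    (h1 : (u : ℤ) ∣ v - v') (h2 : ∀ i, (u : ℤ) ∣ r i - r' i) :
    ec u (d * fval M α β ℓ m v r) = ec u (d * fval M α β ℓ m v' r') := by
  obtain ⟨zm, hzm⟩ := hm
  obtain ⟨zl, hzl⟩ := hℓ
  set k : ℤ := (v - v') / u with hkdef
  have hk : v = v' + (u : ℤ) * k := by
    have := Int.mul_ediv_cancel' h1
    rw [hkdef]; linarith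
  set b : Fin g → ℤ := fun i => (r i - r' i) / u with hbdef
  have hr : r = r' + fun i => (u : ℤ) * b i := by
    funext i
    have := Int.mul_ediv_cancel' (h2 i)
    simp only [Pi.add_apply, hbdef]
    linarith
  obtain ⟨zab, hzab⟩ := hα b
  obtain ⟨zar, hzar⟩ := hα r'
  obtain ⟨zbb, hzbb⟩ := hβ b
  obtain ⟨zq, hzq⟩ := qf_int M hsymm hdiag b
  have hsc : (fun i => (((u : ℤ) * b i : ℤ) : ℚ)) = (u : ℚ) • (fun i => (b i : ℚ)) := by
    funext i
    simp only [Pi.smul_apply, smul_eq_mul]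
    push_cast
    ring
  set Z : ℤ := d * (zm * (2 * k * v' + u * k ^ 2) - zab * (v' + u * k) - zar * k
      - dotProduct r' (M.mulVec b) - u * zq + zbb - zl * k) with hZdef
  have key : d * fval M α β ℓ m (v' + (u : ℤ) * k) (r' + fun i => (u : ℤ) * b i)
      = d * fval M α β ℓ m v' r' + (u : ℚ) * ((Z : ℤ) : ℚ) := by
    rw [fval_shift M α β ℓ m hsymm, hsc]
    simp only [bform_smul_right, qf_smul]
    rw [hzm, hzl, hzab, hzbb, hzq, bform_intcast, hzar, hZdef]
    push_cast
    ring
  rw [hk, hr, key, ec_add, ec_u_mul_int u hu Z, mul_one]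

lemma fval_shift_special (hsymm : M.IsSymm) (hdet : M.det ≠ 0)
    (α β : Fin g → ℚ) (ℓ m : ℤ) (a : Fin g → ℤ)
    (ha : ∀ i, (a i : ℚ) = (M.det : ℚ) * α i) (v eI : ℤ) (r : Fin g → ℤ) :
    fval M α β ℓ m (v + M.det * eI) (r + fun i => -(eI * a i))
      = fval M α β ℓ m v r + (eI : ℚ) * (m : ℚ) * (v : ℚ)
        + (M.det : ℚ) * (eI : ℚ) ^ 2 * (m : ℚ) / 2 - (eI : ℚ) * (ℓ : ℚ) := by
  have hsc : (fun i => ((-(eI * a i) : ℤ) : ℚ))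
      = ((-(eI : ℚ)) * (M.det : ℚ)) • α := by
    funext i
    simp only [Pi.smul_apply, smul_eq_mul]
    push_cast [ha i]
    ring
  rw [fval_shift M α β ℓ m hsymm, hsc]
  simp only [bform_smul_right, qf_smul]
  rw [bform_comm M hsymm (fun i => (r i : ℚ)) α, bform_comm M hsymm β α]
  simp only [qf]
  have hΔ : ((M.det : ℚ)) ≠ 0 := Int.cast_ne_zero.mpr hdet
  push_cast [-Int.cast_det]
  field_simp
  ring

end Lemmas4

lemma mod_shift_dvd (u : ℕ) (hu0 : 0 < u) (x : ℕ) (t : ℤ) :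
    (u : ℤ) ∣ (((x + (t % (u : ℤ)).toNat) % u : ℕ) : ℤ) - ((x : ℤ) + t) := by
  have hnn : 0 ≤ t % (u : ℤ) := Int.emod_nonneg t (by positivity)
  refine ⟨-(((x : ℤ) + t % (u : ℤ)) / u) - t / u, ?_⟩
  push_cast [Int.toNat_of_nonneg hnn]
  simp only [Int.emod_def]
  ring


set_option maxHeartbeats 1000000 in
/-- `𝒮(d,u) = 0` unless `gcd(m,u) ∣ ℓ` (Lemma 9 of the paper). -/
theorem Ssum_eq_zero_of_not_dvd
    {g : ℕ} (hg : Odd g) (M : Matrix (Fin g) (Fin g) ℤ)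
    (hsymm : M.IsSymm) (hdiag : ∀ i, Even (M i i)) (hdet : M.det ≠ 0)
    (α β : Fin g → ℚ) (hα : IsDual M α) (hβ : IsDual M β)
    (ℓ m n : ℤ)
    (hm : ∃ z : ℤ, (m : ℚ) / (2 * M.det) - qf M α = (z : ℚ))
    (hℓ : ∃ z : ℤ, (ℓ : ℚ) / (M.det : ℚ) - bform M α β = (z : ℚ))
    (u : ℕ) (hu : 1 ≤ u) (d : ℤ) (hd : Int.gcd d (u : ℤ) = 1)
    (hnd : ¬ ((Int.gcd m (u : ℤ) : ℤ) ∣ ℓ)) :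
    Ssum M α β ℓ m d u = 0 := by
  classical
  have hu0 : 0 < u := hu
  have hune : u ≠ 0 := hu0.ne'
  obtain ⟨a, ha⟩ := exists_dual_rep M hsymm α hα
  set c : ℤ := (Int.gcd m (u : ℤ) : ℤ) with hcdef
  have hcne : c ≠ 0 := by
    simp only [hcdef]
    intro h
    have : Int.gcd m (u : ℤ) = 0 := by exact_mod_cast h
    rw [Int.gcd_eq_zero_iff] at this
    exact (by exact_mod_cast hune : ((u : ℤ)) ≠ 0) this.2
  have hcu : c ∣ (u : ℤ) := Int.gcd_dvd_right _ _
  have hcm : c ∣ m := Int.gcd_dvd_left _ _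
  set e : ℤ := (u : ℤ) / c with hedef
  have he : (u : ℤ) = c * e := (Int.mul_ediv_cancel' hcu).symm
  set me : ℤ := m / c with hmedef
  have hme : m = c * me := (Int.mul_ediv_cancel' hcm).symm
  obtain ⟨Δ2, hΔ2⟩ := even_det M hg hsymm hdiag
  set K : ℂ := ec c (((-(d * ℓ) : ℤ) : ℚ)) with hKdef
  -- the summand
  set F : Fin u × (Fin g → Fin u) → ℂ := fun p =>
    ec u ((d : ℚ) * fval M α β ℓ m ((p.1 : ℕ) : ℤ) (fun i => ((p.2 i : ℕ) : ℤ))) with hFdef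
  set T : ℕ := ((M.det * e) % (u : ℤ)).toNat with hTdef
  set S : Fin g → ℕ := fun i => ((-(e * a i)) % (u : ℤ)).toNat with hSdef
  set Φ : (Fin u × (Fin g → Fin u)) → (Fin u × (Fin g → Fin u)) := fun p =>
    (⟨((p.1 : ℕ) + T) % u, Nat.mod_lt _ hu0⟩,
      fun i => ⟨((p.2 i : ℕ) + S i) % u, Nat.mod_lt _ hu0⟩) with hΦdef
  have hΦbij : Function.Bijective Φ := by
    rw [← Finite.injective_iff_bijective]
    intro p q hpq
    have h1 : ((p.1 : ℕ) + T) % u = ((q.1 : ℕ) + T) % u :=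
      congrArg Fin.val (congrArg Prod.fst hpq)
    have h2 : ∀ i, ((p.2 i : ℕ) + S i) % u = ((q.2 i : ℕ) + S i) % u := fun i =>
      congrArg Fin.val (congrFun (congrArg Prod.snd hpq) i)
    refine Prod.ext (Fin.ext ?_) (funext fun i => Fin.ext ?_)
    · have hp := p.1.isLt
      have hq := q.1.isLt
      have h5 := Nat.ModEq.add_right_cancel' T h1
      rwa [Nat.ModEq, Nat.mod_eq_of_lt hp, Nat.mod_eq_of_lt hq] at h5
    · have hp := (p.2 i).isLt
      have hq := (q.2 i).isLt
      have h5 := Nat.ModEq.add_right_cancel' (S i) (h2 i)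
      rwa [Nat.ModEq, Nat.mod_eq_of_lt hp, Nat.mod_eq_of_lt hq] at h5
  have hpoint : ∀ p : Fin u × (Fin g → Fin u), F (Φ p) = K * F p := by
    intro p
    have hstep1 : F (Φ p) = ec u ((d : ℚ) * fval M α β ℓ m (((p.1 : ℕ) : ℤ) + M.det * e)
        ((fun i => ((p.2 i : ℕ) : ℤ)) + fun i => -(e * a i))) := by
      rw [hFdef, hΦdef]
      refine ec_fval_congr M hsymm hdiag α β ℓ m hm hℓ hα hβ u hune d _ _ _ _ ?_ ?_
      · rw [hTdef]
        exact mod_shift_dvd u hu0 (p.1 : ℕ) (M.det * e)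
      · intro i
        rw [hSdef]
        exact mod_shift_dvd u hu0 ((p.2 i : ℕ)) (-(e * a i))
    have hrat : (d : ℚ) * fval M α β ℓ m (((p.1 : ℕ) : ℤ) + M.det * e)
        ((fun i => ((p.2 i : ℕ) : ℤ)) + fun i => -(e * a i))
        = (d : ℚ) * fval M α β ℓ m ((p.1 : ℕ) : ℤ) (fun i => ((p.2 i : ℕ) : ℤ))
          + (u : ℚ) * ((d * me * ((p.1 : ℕ) : ℤ) : ℤ) : ℚ)
          + (u : ℚ) * ((d * Δ2 * e * me : ℤ) : ℚ)
          + (e : ℚ) * ((-(d * ℓ) : ℤ) : ℚ) := by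
      rw [fval_shift_special M hsymm hdet α β ℓ m a ha ((p.1 : ℕ) : ℤ) e
        (fun i => ((p.2 i : ℕ) : ℤ))]
      have he' : ((u : ℕ) : ℚ) = (c : ℚ) * (e : ℚ) := by exact_mod_cast he
      have hme' : ((m : ℤ) : ℚ) = (c : ℚ) * (me : ℚ) := by exact_mod_cast hme
      have hΔ2' : ((M.det : ℤ) : ℚ) = 2 * (Δ2 : ℚ) := by exact_mod_cast hΔ2
      push_cast [-Int.cast_det]
      rw [he', hme', hΔ2']
      ring
    rw [hstep1, hrat, ec_add, ec_add, ec_add, ec_u_mul_int u hune, ec_u_mul_int u hune,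
      ec_scale u c e he hcne hune, mul_one, mul_one, hKdef, hFdef]
    ring
  have hsum1 : Ssum M α β ℓ m d u = ∑ p : Fin u × (Fin g → Fin u), F p := by
    rw [Ssum, hFdef]
    exact (Fintype.sum_prod_type (fun p : Fin u × (Fin g → Fin u) =>
      ec u ((d : ℚ) * fval M α β ℓ m ((p.1 : ℕ) : ℤ)
        (fun i => ((p.2 i : ℕ) : ℤ))))).symm
  have hsum2 : ∑ p : Fin u × (Fin g → Fin u), F (Φ p)
      = ∑ p : Fin u × (Fin g → Fin u), F p :=
    hΦbij.sum_comp F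
  have hKS : Ssum M α β ℓ m d u = K * Ssum M α β ℓ m d u := by
    calc Ssum M α β ℓ m d u = ∑ p : Fin u × (Fin g → Fin u), F p := hsum1
      _ = ∑ p : Fin u × (Fin g → Fin u), F (Φ p) := hsum2.symm
      _ = ∑ p : Fin u × (Fin g → Fin u), K * F p :=
          Finset.sum_congr rfl fun p _ => hpoint p
      _ = K * ∑ p : Fin u × (Fin g → Fin u), F p := by rw [← Finset.mul_sum]
      _ = K * Ssum M α β ℓ m d u := by rw [← hsum1]
  have hKne : K ≠ 1 := by
    intro hK1
    rw [hKdef, ec] at hK1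
    obtain ⟨nn, hn⟩ := Complex.exp_eq_one_iff.mp hK1
    have hcC : (c : ℂ) ≠ 0 := Int.cast_ne_zero.mpr hcne
    have h2πI : (2 * (Real.pi : ℂ) * Complex.I) ≠ 0 := by
      simp [Real.pi_ne_zero, Complex.I_ne_zero]
    rw [div_eq_iff hcC] at hn
    have h2 : (((-(d * ℓ) : ℤ) : ℚ) : ℂ) = (nn : ℂ) * (c : ℂ) := by
      apply mul_left_cancel₀ h2πI
      rw [hn]
      ring
    have h4 : -(d * ℓ) = nn * c := by exact_mod_cast h2
    have h3 : c ∣ d * ℓ := ⟨-nn, by linear_combination -h4⟩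
    have hco : IsCoprime d (u : ℤ) := Int.isCoprime_iff_gcd_eq_one.mpr hd
    have hco2 : IsCoprime c d := (hco.of_isCoprime_of_dvd_right hcu).symm
    exact hnd (hco2.dvd_of_dvd_mul_left h3)
  have h0 : (1 - K) * Ssum M α β ℓ m d u = 0 := by
    rw [sub_mul, one_mul, ← hKS, sub_self]
  rcases mul_eq_zero.mp h0 with h | h
  · exact absurd (sub_eq_zero.mp h).symm hKne
  · exact h
end

section
/- Let p be an odd prime with gcd(m, Δ, p) = 1 and p² ∤ m. Let α, β ∈ L' and let ℓ, m be integers with m/(2Δ) − q(α) ∈ ℤ and ℓ/Δ − ⟨α,β⟩ ∈ ℤ, and assume that p | ℓ whenever p | m. Let k ≥ 1 be an integer and let w be an integer such that mw ≡ ℓ (mod p^k) if p ∤ m, and (m/p)·w ≡ ℓ/p (mod p^k) if p | m. Then β − wα ∈ ℤ^g + p^k·L', that is, there exist s ∈ ℤ^g and γ ∈ L' with β − wα = s + p^k·γ. -/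
open scoped BigOperators Classical

open Matrix


theorem exists_diag {g : ℕ} (M : Matrix (Fin g) (Fin g) ℤ) (hdet : M.det ≠ 0) :
    ∃ (P Q : Matrix (Fin g) (Fin g) ℤ) (d : Fin g → ℤ),
      IsUnit P.det ∧ IsUnit Q.det ∧ M * P = Q * Matrix.diagonal d := by
  classical
  set F : (Fin g → ℤ) →ₗ[ℤ] (Fin g → ℤ) := M.mulVecLin with hF
  have hFinj : Function.Injective F := by
    rw [← LinearMap.ker_eq_bot, Matrix.ker_mulVecLin_eq_bot_iff]
    intro v hv
    have h2 : (M.adjugate * M) *ᵥ v = M.det • v := by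
      rw [Matrix.adjugate_mul, Matrix.smul_mulVec, Matrix.one_mulVec]
    rw [← Matrix.mulVec_mulVec, hv, Matrix.mulVec_zero] at h2
    funext i
    have := congrFun h2 i
    simp only [Pi.zero_apply, Pi.smul_apply, smul_eq_mul] at this
    rcases mul_eq_zero.mp this.symm with h | h
    · exact absurd h hdet
    · exact h
  set N := LinearMap.range F with hN
  obtain ⟨n, snf⟩ := Submodule.smithNormalForm (Pi.basisFun ℤ (Fin g)) N
  set eqv : (Fin g → ℤ) ≃ₗ[ℤ] N := LinearEquiv.ofInjective F hFinj with heqv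
  -- n = g
  have e : Fin n ≃ Fin g := ((snf.bN.map eqv.symm).indexEquiv (Pi.basisFun ℤ (Fin g)))
  set bN' : Module.Basis (Fin g) ℤ N := snf.bN.reindex e with hbN'
  set c : Fin g → (Fin g → ℤ) := fun j => eqv.symm (bN' j) with hc
  have hFc : ∀ j, F (c j) = (bN' j : Fin g → ℤ) := by
    intro j
    simp only [hc]
    have := LinearEquiv.ofInjective_apply F (h := hFinj) (eqv.symm (bN' j))
    rw [← this, heqv, LinearEquiv.apply_symm_apply]
  set femb : Fin g → Fin g := fun j => snf.f (e.symm j) with hfemb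
  have hfembInj : Function.Injective femb := fun x y hxy => by
    have := snf.f.injective hxy
    exact e.symm.injective this
  have hfembBij : Function.Bijective femb := Finite.injective_iff_bijective.mp hfembInj
  set fE : Fin g ≃ Fin g := Equiv.ofBijective femb hfembBij with hfE
  set basisC : Module.Basis (Fin g) ℤ (Fin g → ℤ) := bN'.map eqv.symm with hbasisC
  set basisQ : Module.Basis (Fin g) ℤ (Fin g → ℤ) := snf.bM.reindex fE.symm with hbasisQ
  set P : Matrix (Fin g) (Fin g) ℤ := (Pi.basisFun ℤ (Fin g)).toMatrix basisC with hP
  set Q : Matrix (Fin g) (Fin g) ℤ := (Pi.basisFun ℤ (Fin g)).toMatrix basisQ with hQ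
  have hPdet : IsUnit P.det := by
    have h1 := Module.Basis.toMatrix_mul_toMatrix_flip (Pi.basisFun ℤ (Fin g)) basisC
    have := congrArg Matrix.det h1
    rw [Matrix.det_mul, Matrix.det_one] at this
    exact IsUnit.of_mul_eq_one _ this
  have hQdet : IsUnit Q.det := by
    have h1 := Module.Basis.toMatrix_mul_toMatrix_flip (Pi.basisFun ℤ (Fin g)) basisQ
    have := congrArg Matrix.det h1
    rw [Matrix.det_mul, Matrix.det_one] at this
    exact IsUnit.of_mul_eq_one _ this
  set d : Fin g → ℤ := fun j => snf.a (e.symm j) with hd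
  refine ⟨P, Q, d, hPdet, hQdet, ?_⟩
  ext i j
  have hPcol : ∀ x, P x j = basisC j x := by
    intro x
    simp [hP, Module.Basis.toMatrix_apply]
  have hQcol : ∀ x, Q x j = basisQ j x := by
    intro x
    simp [hQ, Module.Basis.toMatrix_apply]
  have hMP : (M * P) i j = (M *ᵥ (basisC j)) i := by
    simp only [Matrix.mul_apply, Matrix.mulVec, dotProduct]
    exact Finset.sum_congr rfl fun x _ => by rw [hPcol x]
  have hMc : M *ᵥ (basisC j) = d j • (basisQ j) := by
    have h1 : F (basisC j) = (bN' j : Fin g → ℤ) := by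
      rw [hbasisC, Module.Basis.map_apply]
      exact hFc j
    have h2 : (bN' j : Fin g → ℤ) = snf.a (e.symm j) • (snf.bM (snf.f (e.symm j))) := by
      rw [hbN', Module.Basis.reindex_apply]
      exact snf.snf (e.symm j)
    have h3 : basisQ j = snf.bM (snf.f (e.symm j)) := by
      rw [hbasisQ, Module.Basis.reindex_apply, Equiv.symm_symm]
      rfl
    have h4 : F (basisC j) = M *ᵥ (basisC j) := rfl
    rw [← h4, h1, h2, h3, hd]
  rw [hMP, hMc, Matrix.mul_diagonal, hQcol]
  simp [mul_comm]

theorem core_div {g : ℕ} (p : ℕ) (hp : p.Prime) (k : ℕ)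
    (d a' b' a'' : Fin g → ℤ) (ε Δ m ℓ w z z' : ℤ)
    (hε : ε * ε = 1)
    (hΔj : ∀ j, Δ = ε * (d j * (∏ l ∈ Finset.univ.erase j, d l)))
    (hmeq : m = ε * (∑ j, a'' j * a' j * ∏ l ∈ Finset.univ.erase j, d l) + 2*Δ*z)
    (hleq : ℓ = ε * (∑ j, a'' j * b' j * ∏ l ∈ Finset.univ.erase j, d l) + Δ*z')
    (hgcd : ¬ ((p:ℤ) ∣ m ∧ (p:ℤ) ∣ Δ))
    (hw1 : ¬ ((p:ℤ) ∣ m) → (p:ℤ)^k ∣ (m*w - ℓ)) :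
    ∀ j, ∃ x y : ℤ, b' j - w * a' j = d j * x + (p:ℤ)^k * y := by
  classical
  have hpZ : Prime (p : ℤ) := Nat.prime_iff_prime_int.mp hp
  intro j
  set T : Fin g → ℤ := fun l => ∏ x ∈ Finset.univ.erase l, d x with hT
  by_cases hpd : (p:ℤ) ∣ d j
  · -- hard case
    have hpΔ : (p:ℤ) ∣ Δ := by
      rw [hΔj j]
      exact Dvd.dvd.mul_left (hpd.mul_right _) ε
    have hpm : ¬ (p:ℤ) ∣ m := fun h => hgcd ⟨h, hpΔ⟩
    have hdjT : ∀ l, l ≠ j → d j ∣ T l := by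
      intro l hl
      exact Finset.dvd_prod_of_mem d (by simp [Finset.mem_erase, Ne.symm hl])
    have hterm : ¬ (p:ℤ) ∣ (a'' j * a' j * T j) := by
      intro hcon
      apply hpm
      rw [hmeq]
      have hsum : (p:ℤ) ∣ ∑ l, a'' l * a' l * T l := by
        apply Finset.dvd_sum
        intro l _
        by_cases hlj : l = j
        · subst hlj; exact hcon
        · exact dvd_mul_of_dvd_right (hpd.trans (hdjT l hlj)) _
      exact dvd_add (hsum.mul_left ε) (dvd_mul_of_dvd_left (hpΔ.mul_left 2) z)
    have hunit : ¬ (p:ℤ) ∣ (a'' j * T j) := by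
      intro hcon
      exact hterm (by
        have : a'' j * a' j * T j = (a'' j * T j) * a' j := by ring
        rw [this]; exact hcon.mul_right _)
    set G : ℤ := ((d j).gcd ((p:ℤ)^k) : ℤ) with hG
    have hG1 : G ∣ d j := Int.gcd_dvd_left _ _
    have hG2 : G ∣ (p:ℤ)^k := Int.gcd_dvd_right _ _
    have hGΔ : G ∣ Δ := by
      rw [hΔj j]; exact Dvd.dvd.mul_left (hG1.mul_right _) ε
    have hGlm : G ∣ (ℓ - m * w) := by
      have h1 : (p:ℤ)^k ∣ (ℓ - m * w) := by
        have := (hw1 hpm).neg_right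
        rwa [neg_sub] at this
      exact hG2.trans h1
    have hGεS : G ∣ ε * (∑ l, a'' l * (b' l - w * a' l) * T l) := by
      have hsplit0 : ∑ l, a'' l * (b' l - w * a' l) * T l
          = (∑ l, a'' l * b' l * T l) - w * ∑ l, a'' l * a' l * T l := by
        rw [Finset.mul_sum, ← Finset.sum_sub_distrib]
        apply Finset.sum_congr rfl
        intros; ring
      have key : ε * (∑ l, a'' l * (b' l - w * a' l) * T l)
          = (ℓ - m * w) - Δ * (z' - 2 * z * w) := by
        rw [hsplit0, hleq, hmeq]; ring
      rw [key]
      exact dvd_sub hGlm (hGΔ.mul_right _)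
    have hGS : G ∣ (∑ l, a'' l * (b' l - w * a' l) * T l) := by
      have h2 : ε * (ε * (∑ l, a'' l * (b' l - w * a' l) * T l))
          = ∑ l, a'' l * (b' l - w * a' l) * T l := by
        rw [← mul_assoc, hε, one_mul]
      rw [← h2]
      exact hGεS.mul_left ε
    have hGterm : G ∣ a'' j * (b' j - w * a' j) * T j := by
      have hrest : G ∣ ∑ l ∈ Finset.univ.erase j, a'' l * (b' l - w * a' l) * T l := by
        apply Finset.dvd_sum
        intro l hl
        have hlj : l ≠ j := (Finset.mem_erase.mp hl).1
        exact dvd_mul_of_dvd_right (hG1.trans (hdjT l hlj)) _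
      have hsplit : a'' j * (b' j - w * a' j) * T j
          = (∑ l, a'' l * (b' l - w * a' l) * T l)
            - ∑ l ∈ Finset.univ.erase j, a'' l * (b' l - w * a' l) * T l := by
        rw [← Finset.add_sum_erase _ _ (Finset.mem_univ j)]
        ring
      rw [hsplit]
      exact dvd_sub hGS hrest
    have hco : IsCoprime G (a'' j * T j) := by
      have h1 : IsCoprime ((p:ℤ)^k) (a'' j * T j) :=
        ((hpZ.coprime_iff_not_dvd).mpr hunit).pow_left
      exact h1.of_isCoprime_of_dvd_left hG2
    have hfinal : G ∣ (b' j - w * a' j) := by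
      apply hco.dvd_of_dvd_mul_right
      have : a'' j * (b' j - w * a' j) * T j = (b' j - w * a' j) * (a'' j * T j) := by ring
      rwa [this] at hGterm
    obtain ⟨c, hc⟩ := hfinal
    refine ⟨(d j).gcdA ((p:ℤ)^k) * c, (d j).gcdB ((p:ℤ)^k) * c, ?_⟩
    have hbez := Int.gcd_eq_gcd_ab (d j) ((p:ℤ)^k)
    rw [hc, ← hG] at *
    rw [hbez]
    ring
  · -- easy case
    have hco : IsCoprime (d j) ((p:ℤ)^k) :=
      (((hpZ.coprime_iff_not_dvd).mpr hpd).pow_left).symm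
    obtain ⟨u, v, huv⟩ := hco
    exact ⟨u * (b' j - w * a' j), v * (b' j - w * a' j), by
      have : (u * d j + v * (p:ℤ)^k) * (b' j - w * a' j) = b' j - w * a' j := by
        rw [huv, one_mul]
      linear_combination -this⟩
section Aux
variable {g : ℕ}

lemma castVec (M : Matrix (Fin g) (Fin g) ℤ) (s : Fin g → ℤ) :
    (fun i => ((M *ᵥ s) i : ℚ)) = (M.map (Int.cast : ℤ → ℚ)) *ᵥ (fun i => (s i : ℚ)) := by
  funext i
  simp only [Matrix.mulVec, dotProduct, Matrix.map_apply]
  push_cast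
  rfl

lemma bform_symmetric (M : Matrix (Fin g) (Fin g) ℤ) (hsymm : M.IsSymm) (x y : Fin g → ℚ) :
    bform M x y = bform M y x := by
  unfold bform
  have hMq : (M.map (Int.cast : ℤ → ℚ))ᵀ = M.map (Int.cast : ℤ → ℚ) := by
    rw [← Matrix.transpose_map, hsymm.eq]
  rw [Matrix.dotProduct_mulVec, ← hMq, Matrix.vecMul_transpose, hMq]
  exact dotProduct_comm _ _
end Aux

section Aux2
variable {g : ℕ}

lemma dual_to_vec (M : Matrix (Fin g) (Fin g) ℤ) (hsymm : M.IsSymm) (x : Fin g → ℚ)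
    (hx : IsDual M x) :
    ∃ a : Fin g → ℤ, (M.map (Int.cast : ℤ → ℚ)) *ᵥ x = fun j => (a j : ℚ) := by
  classical
  have h : ∀ j : Fin g, ∃ z : ℤ, ((M.map (Int.cast : ℤ → ℚ)) *ᵥ x) j = (z : ℚ) := by
    intro j
    obtain ⟨z, hz⟩ := hx (Pi.single j 1)
    refine ⟨z, ?_⟩
    rw [← hz, bform_symmetric M hsymm]
    unfold bform
    have hsingle : (fun i => (((Pi.single j 1 : Fin g → ℤ) i : ℤ) : ℚ)) = Pi.single j (1:ℚ) := by
      funext i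
      by_cases hij : i = j
      · subst hij; simp
      · simp [Pi.single_apply, hij]
    rw [hsingle]
    simp [dotProduct, Pi.single_apply]
  choose a ha using h
  exact ⟨a, funext ha⟩

lemma vec_to_dual (M : Matrix (Fin g) (Fin g) ℤ) (hsymm : M.IsSymm) (x : Fin g → ℚ)
    (t : Fin g → ℤ) (hx : (M.map (Int.cast : ℤ → ℚ)) *ᵥ x = fun j => (t j : ℚ)) :
    IsDual M x := by
  intro y
  refine ⟨∑ j, t j * y j, ?_⟩
  have := bform_symmetric M hsymm x (fun i => (y i : ℚ))
  rw [this]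
  unfold bform
  rw [hx]
  simp only [dotProduct]
  push_cast
  apply Finset.sum_congr rfl
  intros; ring
end Aux2

/-- `β − wα ∈ ℤ^g + p^k L'` (Lemma 10 of the paper). -/
theorem beta_sub_w_alpha_in_L_add_pk_dual
    {g : ℕ} (hg : 0 < g) (M : Matrix (Fin g) (Fin g) ℤ)
    (hsymm : M.IsSymm) (hdiag : ∀ i, Even (M i i)) (hdet : M.det ≠ 0)
    (α β : Fin g → ℚ) (hα : IsDual M α) (hβ : IsDual M β)
    (ℓ m : ℤ)
    (hm : ∃ z : ℤ, (m : ℚ) / (2 * M.det) - qf M α = (z : ℚ))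
    (hℓ : ∃ z : ℤ, (ℓ : ℚ) / (M.det : ℚ) - bform M α β = (z : ℚ))
    (p : ℕ) (hp : p.Prime) (hodd : Odd p)
    (hgcd : ¬ ((p : ℤ) ∣ m ∧ (p : ℤ) ∣ M.det))
    (hpsq : ¬ ((p : ℤ) ^ 2 ∣ m))
    (hdvd : (p : ℤ) ∣ m → (p : ℤ) ∣ ℓ)
    (k : ℕ) (hk : 1 ≤ k) (w : ℤ)
    (hw1 : ¬ ((p : ℤ) ∣ m) → (p : ℤ) ^ k ∣ (m * w - ℓ))
    (hw2 : (p : ℤ) ∣ m → (p : ℤ) ^ k ∣ ((m / (p : ℤ)) * w - ℓ / (p : ℤ))) :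
    ∃ (s : Fin g → ℤ) (γ : Fin g → ℚ), IsDual M γ ∧
      ∀ i, β i - (w : ℚ) * α i = (s i : ℚ) + (p : ℚ) ^ k * γ i := by
  classical
  set Mq : Matrix (Fin g) (Fin g) ℚ := M.map (Int.cast : ℤ → ℚ) with hMqdef
  have hMqdet : Mq.det = (M.det : ℚ) := by
    rw [hMqdef]
    exact (RingHom.map_det (Int.castRingHom ℚ) M).symm
  have hΔ0 : (M.det : ℚ) ≠ 0 := Int.cast_ne_zero.mpr hdet
  have hMqu : IsUnit Mq.det := isUnit_iff_ne_zero.mpr (by rw [hMqdet]; exact hΔ0)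
  have hMqinv : Invertible Mq := Mq.invertibleOfIsUnitDet hMqu
  have hMqcancel : ∀ x y : Fin g → ℚ, Mq *ᵥ x = Mq *ᵥ y → x = y := by
    intro x y hxy
    have h2 := congrArg (fun v => (⅟Mq) *ᵥ v) hxy
    simpa [Matrix.mulVec_mulVec, invOf_mul_self, Matrix.one_mulVec] using h2
  obtain ⟨a, ha⟩ := dual_to_vec M hsymm α hα
  obtain ⟨b, hb⟩ := dual_to_vec M hsymm β hβ
  obtain ⟨P, Q, d, hPu, hQu, hMPQ⟩ := exists_diag M hdet
  have hPinv : Invertible P := P.invertibleOfIsUnitDet hPu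
  have hQinv : Invertible Q := Q.invertibleOfIsUnitDet hQu
  have hdet_rel : M.det * P.det = Q.det * ∏ j, d j := by
    have h := congrArg Matrix.det hMPQ
    rwa [Matrix.det_mul, Matrix.det_mul, Matrix.det_diagonal] at h
  set ε : ℤ := P.det * Q.det with hεdef
  have hPdet2 : P.det * P.det = 1 := by
    rcases Int.isUnit_iff.mp hPu with h | h <;> rw [h] <;> norm_num
  have hε2 : ε * ε = 1 := by
    rcases Int.isUnit_iff.mp hPu with h1 | h1 <;>
      rcases Int.isUnit_iff.mp hQu with h2 | h2 <;> simp [hεdef, h1, h2]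
  have hΔprod : M.det = ε * ∏ j, d j := by
    have h : M.det * (P.det * P.det) = (M.det * P.det) * P.det := by ring
    rw [hPdet2, mul_one] at h
    rw [h, hdet_rel, hεdef]; ring
  have hdne : ∀ j, d j ≠ 0 := by
    intro j hj
    exact hdet (by rw [hΔprod, Finset.prod_eq_zero (Finset.mem_univ j) hj, mul_zero])
  have hΔj : ∀ j, M.det = ε * (d j * ∏ l ∈ Finset.univ.erase j, d l) := by
    intro j
    rw [hΔprod, Finset.mul_prod_erase _ _ (Finset.mem_univ j)]
  set a' : Fin g → ℤ := (⅟Q) *ᵥ a with ha'def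
  set b' : Fin g → ℤ := (⅟Q) *ᵥ b with hb'def
  set a'' : Fin g → ℤ := Pᵀ *ᵥ a with ha''def
  have hQa' : Q *ᵥ a' = a := by
    rw [ha'def, Matrix.mulVec_mulVec, mul_invOf_self, Matrix.one_mulVec]
  have hQb' : Q *ᵥ b' = b := by
    rw [hb'def, Matrix.mulVec_mulVec, mul_invOf_self, Matrix.one_mulVec]
  -- the master computation
  have hmaster : ∀ (x : Fin g → ℚ) (t : Fin g → ℤ), Mq *ᵥ x = (fun j => (t j : ℚ)) →
      (M.det : ℚ) * (x ⬝ᵥ (fun j => (a j : ℚ)))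
        = ((ε * ∑ j, a'' j * (((⅟Q) *ᵥ t) j) * ∏ l ∈ Finset.univ.erase j, d l : ℤ) : ℚ) := by
    intro x t hxt
    set t' : Fin g → ℤ := (⅟Q) *ᵥ t with ht'def
    set ξ : Fin g → ℚ := fun j => (t' j : ℚ) / (d j : ℚ) with hξ
    have hMqPq : Mq * (P.map (Int.cast : ℤ → ℚ))
        = (Q.map (Int.cast : ℤ → ℚ)) * ((Matrix.diagonal d).map (Int.cast : ℤ → ℚ)) := by
      have h2 : (M * P).map ⇑(Int.castRingHom ℚ)
          = (Q * Matrix.diagonal d).map ⇑(Int.castRingHom ℚ) := by rw [hMPQ]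
      rw [Matrix.map_mul, Matrix.map_mul] at h2
      simpa [Int.coe_castRingHom, hMqdef] using h2
    have hdiagmap : (Matrix.diagonal d).map (Int.cast : ℤ → ℚ)
        = Matrix.diagonal (fun j => (d j : ℚ)) := Matrix.diagonal_map (by simp)
    have hstep1 : Mq *ᵥ ((P.map (Int.cast : ℤ → ℚ)) *ᵥ ξ) = fun j => (t j : ℚ) := by
      rw [Matrix.mulVec_mulVec, hMqPq, ← Matrix.mulVec_mulVec, hdiagmap]
      have h1 : (Matrix.diagonal (fun j => (d j : ℚ))) *ᵥ ξ = fun j => (t' j : ℚ) := by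
        funext j
        simp only [Matrix.mulVec_diagonal, hξ]
        have hdj : ((d j : ℤ) : ℚ) ≠ 0 := Int.cast_ne_zero.mpr (hdne j)
        field_simp
      rw [h1, ← castVec]
      have h2 : Q *ᵥ t' = t := by
        rw [ht'def, Matrix.mulVec_mulVec, mul_invOf_self, Matrix.one_mulVec]
      rw [h2]
    have hxPξ : x = (P.map (Int.cast : ℤ → ℚ)) *ᵥ ξ := hMqcancel _ _ (by rw [hxt, hstep1])
    have hvm : Matrix.vecMul (fun j => ((a j : ℚ))) (P.map (Int.cast : ℤ → ℚ))
        = fun j => (a'' j : ℚ) := by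
      have h3 : (P.map (Int.cast : ℤ → ℚ))ᵀ = Pᵀ.map (Int.cast : ℤ → ℚ) :=
        (Matrix.transpose_map).symm
      rw [← Matrix.mulVec_transpose, h3, ← castVec, ha''def]
    have hdot : x ⬝ᵥ (fun j => (a j : ℚ)) = ∑ j, (a'' j : ℚ) * ξ j := by
      rw [hxPξ, dotProduct_comm, Matrix.dotProduct_mulVec, hvm]
      simp [dotProduct]
    rw [hdot, Finset.mul_sum]
    push_cast
    rw [Finset.mul_sum]
    apply Finset.sum_congr rfl
    intro j _
    have hc : (M.det : ℚ) = (ε : ℚ) * ((d j : ℚ) * ∏ l ∈ Finset.univ.erase j, (d l : ℚ)) := by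
      exact_mod_cast hΔj j
    have hdj : (d j : ℚ) ≠ 0 := Int.cast_ne_zero.mpr (hdne j)
    rw [hξ]
    field_simp
    have hX : (M.map fun x : ℤ => (x : ℚ)).det = (M.det : ℚ) := by rw [← hMqdet]
    linear_combination ((a'' j : ℚ) * (t' j : ℚ)) * hc + ((a'' j : ℚ) * (t' j : ℚ)) * hX
  -- integer form of hm
  set T : Fin g → ℤ := fun j => ∏ l ∈ Finset.univ.erase j, d l with hT
  obtain ⟨z, hz⟩ := hm
  obtain ⟨z', hz'⟩ := hℓ
  have hqα : qf M α = (α ⬝ᵥ (fun j => (a j : ℚ))) / 2 := by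
    unfold qf bform
    rw [ha]
  have hbαβ : bform M α β = β ⬝ᵥ (fun j => (a j : ℚ)) := by
    rw [bform_symmetric M hsymm]
    unfold bform
    rw [ha]
  have h2Δ0 : (2 : ℚ) * (M.det : ℚ) ≠ 0 := by
    intro hcon
    rcases mul_eq_zero.mp hcon with h | h
    · norm_num at h
    · exact hΔ0 h
  have hmeq : m = ε * (∑ j, a'' j * a' j * T j) + 2 * M.det * z := by
    have h3 : (m : ℚ) / (2 * M.det) = (z : ℚ) + (α ⬝ᵥ (fun j => (a j : ℚ))) / 2 := by
      rw [hqα] at hz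
      linear_combination hz
    rw [div_eq_iff h2Δ0] at h3
    have h1 : (m : ℚ) = (M.det : ℚ) * (α ⬝ᵥ (fun j => (a j : ℚ))) + 2 * M.det * z := by
      linear_combination h3
    rw [hmaster α a ha] at h1
    exact_mod_cast h1
  have hleq : ℓ = ε * (∑ j, a'' j * b' j * T j) + M.det * z' := by
    have h3 : (ℓ : ℚ) / (M.det : ℚ) = (z' : ℚ) + (β ⬝ᵥ (fun j => (a j : ℚ))) := by
      rw [hbαβ] at hz'
      linear_combination hz'
    rw [div_eq_iff hΔ0] at h3
    have h1 : (ℓ : ℚ) = (M.det : ℚ) * (β ⬝ᵥ (fun j => (a j : ℚ))) + M.det * z' := by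
      linear_combination h3
    rw [hmaster β b hb] at h1
    exact_mod_cast h1
  -- core divisibility
  have hcore := core_div p hp k d a' b' a'' ε M.det m ℓ w z z' hε2 hΔj hmeq hleq hgcd hw1
  choose xv yv hxy using hcore
  set s : Fin g → ℤ := P *ᵥ xv with hsdef
  set tv : Fin g → ℤ := Q *ᵥ yv with htvdef
  have hkey : ∀ i, b i - w * a i - (M *ᵥ s) i = (p:ℤ)^k * tv i := by
    intro i
    have h1 : (M *ᵥ s) i = (Q *ᵥ (fun j => d j * xv j)) i := by
      rw [hsdef, Matrix.mulVec_mulVec, hMPQ, ← Matrix.mulVec_mulVec]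
      congr 1
      funext j
      exact Matrix.mulVec_diagonal d xv j
    have h2 : b i = (Q *ᵥ b') i := by rw [hQb']
    have h3 : a i = (Q *ᵥ a') i := by rw [hQa']
    have h4 : (Q *ᵥ b') i - w * (Q *ᵥ a') i - (Q *ᵥ (fun j => d j * xv j)) i
        = (Q *ᵥ (fun j => b' j - w * a' j - d j * xv j)) i := by
      simp only [Matrix.mulVec, dotProduct, Finset.mul_sum, ← Finset.sum_sub_distrib]
      apply Finset.sum_congr rfl
      intros; ring
    have h5 : (fun j => b' j - w * a' j - d j * xv j) = fun j => (p:ℤ)^k * yv j :=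
      funext fun j => by linear_combination hxy j
    have h6 : (Q *ᵥ (fun j => (p:ℤ)^k * yv j)) i = (p:ℤ)^k * tv i := by
      rw [htvdef]
      simp only [Matrix.mulVec, dotProduct, Finset.mul_sum]
      apply Finset.sum_congr rfl
      intros; ring
    rw [h2, h3, h1, h4, h5, h6]
  have hpk0 : ((p : ℚ))^k ≠ 0 := pow_ne_zero k (by exact_mod_cast hp.ne_zero)
  refine ⟨s, fun i => (β i - (w : ℚ) * α i - (s i : ℚ)) / (p : ℚ)^k, ?_, ?_⟩
  · apply vec_to_dual M hsymm _ tv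
    funext i
    have hlin : (Mq *ᵥ (fun j => (β j - (w:ℚ) * α j - (s j : ℚ)) / (p : ℚ)^k)) i
        = ((Mq *ᵥ β) i - (w:ℚ) * (Mq *ᵥ α) i - (Mq *ᵥ (fun j => (s j : ℚ))) i) / (p : ℚ)^k := by
      simp only [Matrix.mulVec, dotProduct, Finset.sum_div, Finset.mul_sum,
        ← Finset.sum_sub_distrib]
      apply Finset.sum_congr rfl
      intros; ring
    show (Mq *ᵥ (fun j => (β j - (w:ℚ) * α j - (s j : ℚ)) / (p : ℚ)^k)) i = ((tv i : ℤ) : ℚ)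
    rw [hlin]
    have hbi := congrFun hb i
    have hai := congrFun ha i
    have hsi := congrFun (castVec M s) i
    rw [hbi, hai, ← hsi]
    have hki : ((b i : ℤ) : ℚ) - (w : ℚ) * ((a i : ℤ) : ℚ) - (((M *ᵥ s) i : ℤ) : ℚ)
        = (p:ℚ)^k * ((tv i : ℤ) : ℚ) := by exact_mod_cast hkey i
    rw [hki]
    exact mul_div_cancel_left₀ _ hpk0
  · intro i
    field_simp
    ring
end
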